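/- arXiv:0803.1584 — 4 statements merged into one kernel-verified Lean document; each statement's English description precedes it below -/
import Mathlib

section
/- Let (ψ_U)_{U ≥ U₀} be a family of smooth non-increasing functions ψ_U: ℝ₊ → ℝ with ψ_U(t) = 1 for t ≤ 1 − 1/U, ψ_U(t) = 0 for t ≥ 1 + 1/U, and ψ_U^{(j)}(t) = O(U^j) as U → ∞ for each j ≥ 0. Let M_U(s) = ∫₀^∞ ψ_U(t) t^{s−1} dt be the Mellin transform for Re(s) > 0. Then (i) M_U(s) = 1/s + O(1/U) as U → ∞, and (ii) for each c > 0, M_U(s) = O(|s|^{−1}(U/(1+|s|))^c) as |s| → ∞, both estimates being uniform for Re(s) in a fixed bounded interval of positive reals. -/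
noncomputable section

open Real MeasureTheory Filter Set

private lemma setIntegral_eq_of_zero_off {h : ℝ → ℂ} {P Q : Set ℝ} (hP : MeasurableSet P)
    (hQ : MeasurableSet Q) (hQP : Q ⊆ P) (h0 : ∀ t ∈ P, t ∉ Q → h t = 0) :
    ∫ t in P, h t = ∫ t in Q, h t := by
  have h1 : ∫ t in P, h t = ∫ t in P, Q.indicator h t := by
    refine setIntegral_congr_fun hP (fun t ht => ?_)
    by_cases htQ : t ∈ Q
    · rw [Set.indicator_of_mem htQ]
    · rw [Set.indicator_of_notMem htQ, h0 t ht htQ]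
  rw [h1, setIntegral_indicator hQ, Set.inter_eq_self_of_subset_right hQP]

private lemma hasDerivAt_iterDW {f : ℝ → ℝ} (hf : ContDiffOn ℝ (⊤ : ℕ∞) f (Set.Ioi 0))
    (k : ℕ) {t : ℝ} (ht : t ∈ Set.Ioi (0:ℝ)) :
    HasDerivAt (iteratedDerivWithin k f (Set.Ioi 0))
      (iteratedDerivWithin (k+1) f (Set.Ioi 0) t) t := by
  have udo : UniqueDiffOn ℝ (Set.Ioi (0:ℝ)) := isOpen_Ioi.uniqueDiffOn
  have hd : DifferentiableWithinAt ℝ (iteratedDerivWithin k f (Set.Ioi 0)) (Set.Ioi 0) t :=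
    hf.differentiableOn_iteratedDerivWithin (by exact_mod_cast WithTop.coe_lt_top _) udo t ht
  have hda : DifferentiableAt ℝ (iteratedDerivWithin k f (Set.Ioi 0)) t :=
    hd.differentiableAt (isOpen_Ioi.mem_nhds ht)
  have heq : deriv (iteratedDerivWithin k f (Set.Ioi 0)) t
      = iteratedDerivWithin (k+1) f (Set.Ioi 0) t := by
    rw [iteratedDerivWithin_succ, derivWithin_of_isOpen isOpen_Ioi ht]
  exact heq ▸ hda.hasDerivAt

private lemma integrableOn_mul_cpow {h : ℝ → ℝ} {B : ℝ} (hc : ContinuousOn h (Set.Ioi 0))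
    (hB : ∀ t ∈ Set.Ioi (0:ℝ), |h t| ≤ B) {w : ℂ} (hw : -1 < w.re) :
    IntegrableOn (fun t : ℝ => (h t : ℂ) * (t:ℂ) ^ w) (Set.Ioc 0 3) := by
  have h1 : IntegrableOn (fun t : ℝ => (t:ℂ) ^ w) (Set.Ioc (0:ℝ) 3) := by
    have := intervalIntegral.intervalIntegrable_cpow' (a := 0) (b := 3) (r := w) hw
    rwa [intervalIntegrable_iff_integrableOn_Ioc_of_le (by norm_num)] at this
  refine h1.bdd_mul (c := B) ?_ ?_
  · exact ((Complex.continuous_ofReal.comp_continuousOn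
      (hc.mono Set.Ioc_subset_Ioi_self)).aestronglyMeasurable measurableSet_Ioc)
  · refine (ae_restrict_iff' measurableSet_Ioc).2 (ae_of_all _ fun t ht => ?_)
    simpa using hB t (Set.Ioc_subset_Ioi_self ht)

private lemma mellin_ibp (f : ℝ → ℝ) (hg3 : ∀ k : ℕ, iteratedDerivWithin k f (Set.Ioi 0) 3 = 0)
    (hsm : ContDiffOn ℝ (⊤ : ℕ∞) f (Set.Ioi 0))
    (C : ℕ → ℝ) (hC : ∀ j, ∀ t : ℝ, 0 < t → |iteratedDerivWithin j f (Set.Ioi 0) t| ≤ C j)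
    (s : ℂ) (hs : 0 < s.re) (k : ℕ) :
    ∫ t in Set.Ioc (0:ℝ) 3, ((iteratedDerivWithin k f (Set.Ioi 0) t : ℝ) : ℂ) * (t:ℂ) ^ (s + k - 1)
      = -(s + k)⁻¹ * ∫ t in Set.Ioc (0:ℝ) 3,
          ((iteratedDerivWithin (k+1) f (Set.Ioi 0) t : ℝ) : ℂ) * (t:ℂ) ^ (s + (k+1:ℕ) - 1) := by
  have udo : UniqueDiffOn ℝ (Set.Ioi (0:ℝ)) := isOpen_Ioi.uniqueDiffOn
  set g : ℕ → ℝ → ℝ := fun j => iteratedDerivWithin j f (Set.Ioi 0) with hgdef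
  have hcast : (((k+1:ℕ)):ℂ) = (k:ℂ) + 1 := by push_cast; ring
  have hexp : s + ((k+1:ℕ):ℂ) - 1 = s + k := by rw [hcast]; ring
  have hkre : (0:ℝ) ≤ (k:ℝ) := Nat.cast_nonneg k
  have hskre : 0 < (s + k).re := by
    simp only [Complex.add_re, Complex.natCast_re]; linarith
  have hsk0 : (s + (k:ℂ)) ≠ 0 := fun H => by
    rw [H] at hskre; simp at hskre
  have hre1 : (-1:ℝ) < (s + k - 1).re := by
    simp only [Complex.sub_re, Complex.add_re, Complex.natCast_re, Complex.one_re]; linarith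
  have hre2 : (-1:ℝ) < (s + k).re := by linarith
  have hcont : ∀ j, ContinuousOn (g j) (Set.Ioi 0) := fun j =>
    hsm.continuousOn_iteratedDerivWithin (by exact_mod_cast le_top) udo
  have int1 : IntegrableOn (fun t : ℝ => (g k t : ℂ) * (t:ℂ) ^ (s + k - 1)) (Set.Ioc 0 3) :=
    integrableOn_mul_cpow (hcont k) (fun t ht => hC k t ht) hre1
  have int2 : IntegrableOn (fun t : ℝ => (g (k+1) t : ℂ) * (t:ℂ) ^ (s + k)) (Set.Ioc 0 3) :=
    integrableOn_mul_cpow (hcont (k+1)) (fun t ht => hC (k+1) t ht) hre2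
  set F : ℝ → ℂ := fun t => (g k t : ℂ) * ((t:ℂ) ^ (s + k) / (s + k)) with hFdef
  set F' : ℝ → ℂ := fun t =>
    (g (k+1) t : ℂ) * ((t:ℂ) ^ (s + k) / (s + k)) + (g k t : ℂ) * (t:ℂ) ^ (s + k - 1) with hF'def
  have hF : ∀ t ∈ Set.Ioi (0:ℝ), HasDerivAt F (F' t) t := by
    intro t ht
    have h1 : HasDerivAt (fun y : ℝ => ((g k y : ℝ) : ℂ)) ((g (k+1) t : ℝ) : ℂ) t :=
      (hasDerivAt_iterDW hsm k ht).ofReal_comp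
    have h2 : HasDerivAt (fun y : ℝ => (y:ℂ) ^ (s + k) / (s + k)) ((t:ℂ) ^ (s + k - 1)) t := by
      have hne : (s + (k:ℂ) - 1) ≠ -1 := fun H => by
        have := congrArg Complex.re H
        simp only [Complex.sub_re, Complex.add_re, Complex.natCast_re, Complex.one_re,
          Complex.neg_re] at this
        linarith
      have := hasDerivAt_ofReal_cpow_const' (ne_of_gt (show (0:ℝ) < t from ht)) hne
      simpa [sub_add_cancel] using this
    exact h1.mul h2
  have hint : IntervalIntegrable F' volume 0 3 := by
    rw [intervalIntegrable_iff_integrableOn_Ioc_of_le (by norm_num)]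
    refine Integrable.add ?_ int1
    have := int2.mul_const ((s + (k:ℂ))⁻¹)
    exact this.congr (ae_of_all _ fun t => by simp [div_eq_mul_inv, mul_assoc])
  have htend3 : Tendsto F (nhdsWithin 3 (Set.Iio 3)) (nhds 0) := by
    have hc3 : ContinuousAt F 3 := (hF 3 (by norm_num)).continuousAt
    have : F 3 = 0 := by
      have : g k 3 = 0 := hg3 k
      simp [hFdef, this]
    exact this ▸ hc3.continuousWithinAt.tendsto
  have htend0 : Tendsto F (nhdsWithin 0 (Set.Ioi 0)) (nhds 0) := by
    have hp : 0 < s.re + k := by linarith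
    have hb : Tendsto (fun t : ℝ => (C k / ‖s + (k:ℂ)‖) * t ^ (s.re + k))
        (nhdsWithin 0 (Set.Ioi 0)) (nhds 0) := by
      have h0 : Tendsto (fun t : ℝ => t ^ (s.re + k)) (nhds 0) (nhds ((0:ℝ) ^ (s.re + k))) :=
        (Real.continuousAt_rpow_const 0 _ (Or.inr hp.le)).tendsto
      rw [Real.zero_rpow (ne_of_gt hp)] at h0
      have := (h0.const_mul (C k / ‖s + (k:ℂ)‖)).mono_left
        (nhdsWithin_le_nhds (s := Set.Ioi (0:ℝ)))
      simpa using this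
    refine squeeze_zero_norm' ?_ hb
    filter_upwards [self_mem_nhdsWithin] with t ht
    have ht0 : (0:ℝ) < t := ht
    have hnorm : ‖F t‖ = |g k t| * (t ^ (s.re + k) / ‖s + (k:ℂ)‖) := by
      have hre : (s + (k:ℂ)).re = s.re + k := by
        simp [Complex.add_re, Complex.natCast_re]
      simp only [hFdef, norm_mul, norm_div, Complex.norm_real,
        Complex.norm_cpow_eq_rpow_re_of_pos ht0, hre, mul_div_assoc, Real.norm_eq_abs]
    rw [hnorm]
    have h1 : |g k t| ≤ C k := hC k t ht0
    have h2 : (0:ℝ) ≤ t ^ (s.re + k) / ‖s + (k:ℂ)‖ := by positivity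
    calc |g k t| * (t ^ (s.re + k) / ‖s + (k:ℂ)‖)
        ≤ C k * (t ^ (s.re + k) / ‖s + (k:ℂ)‖) := mul_le_mul_of_nonneg_right h1 h2
      _ = C k / ‖s + (k:ℂ)‖ * t ^ (s.re + k) := by ring
  have key : ∫ t in (0:ℝ)..3, F' t = 0 - 0 :=
    intervalIntegral.integral_eq_sub_of_hasDerivAt_of_tendsto (by norm_num)
      (fun x hx => hF x hx.1) hint htend0 htend3
  rw [intervalIntegral.integral_of_le (by norm_num : (0:ℝ) ≤ 3)] at key
  have key2 : (∫ t in Set.Ioc (0:ℝ) 3, (g (k+1) t : ℂ) * ((t:ℂ) ^ (s + k) / (s + k)))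
      + ∫ t in Set.Ioc (0:ℝ) 3, (g k t : ℂ) * (t:ℂ) ^ (s + k - 1) = 0 := by
    rw [← integral_add ?_ int1]
    · simpa using key
    · have := int2.mul_const ((s + (k:ℂ))⁻¹)
      exact this.congr (ae_of_all _ fun t => by simp [div_eq_mul_inv, mul_assoc])
  have key3 : (∫ t in Set.Ioc (0:ℝ) 3, (g (k+1) t : ℂ) * ((t:ℂ) ^ (s + k) / (s + k)))
      = (s + (k:ℂ))⁻¹ * ∫ t in Set.Ioc (0:ℝ) 3, (g (k+1) t : ℂ) * (t:ℂ) ^ (s + k) := by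
    rw [← integral_const_mul]
    refine setIntegral_congr_fun measurableSet_Ioc (fun t _ => ?_)
    simp [div_eq_mul_inv]; ring
  rw [hexp]
  rw [key3] at key2
  have : (∫ t in Set.Ioc (0:ℝ) 3, (g k t : ℂ) * (t:ℂ) ^ (s + k - 1))
      = -((s + (k:ℂ))⁻¹ * ∫ t in Set.Ioc (0:ℝ) 3, (g (k+1) t : ℂ) * (t:ℂ) ^ (s + k)) := by
    exact eq_neg_of_add_eq_zero_right key2
  rw [this]; ring

private lemma iterDW_eq_zero_of_const {f : ℝ → ℝ} (hf : ContDiffOn ℝ (⊤ : ℕ∞) f (Set.Ioi 0))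
    {V : Set ℝ} (hV : IsOpen V) (hVs : V ⊆ Set.Ioi 0) {c : ℝ} (hfc : ∀ x ∈ V, f x = c) :
    ∀ k : ℕ, ∀ t ∈ V, iteratedDerivWithin (k+1) f (Set.Ioi 0) t = 0 := by
  have udo : UniqueDiffOn ℝ (Set.Ioi (0:ℝ)) := isOpen_Ioi.uniqueDiffOn
  intro k
  induction k with
  | zero =>
    intro t ht
    rw [iteratedDerivWithin_succ, derivWithin_of_isOpen isOpen_Ioi (hVs ht)]
    have h0 : iteratedDerivWithin 0 f (Set.Ioi 0) = f := by
      funext x; simp [iteratedDerivWithin_zero]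
    rw [h0]
    have hev : f =ᶠ[nhds t] (fun _ => c) :=
      Filter.eventuallyEq_of_mem (hV.mem_nhds ht) hfc
    rw [hev.deriv_eq, deriv_const]
  | succ k ih =>
    intro t ht
    rw [iteratedDerivWithin_succ, derivWithin_of_isOpen isOpen_Ioi (hVs ht)]
    have hev : iteratedDerivWithin (k+1) f (Set.Ioi 0) =ᶠ[nhds t] (fun _ => (0:ℝ)) :=
      Filter.eventuallyEq_of_mem (hV.mem_nhds ht) (fun x hx => ih x hx)
    rw [hev.deriv_eq, deriv_const]

private lemma mellin_ibp_iter (f : ℝ → ℝ)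
    (hg3 : ∀ k : ℕ, iteratedDerivWithin k f (Set.Ioi 0) 3 = 0)
    (hsm : ContDiffOn ℝ (⊤ : ℕ∞) f (Set.Ioi 0))
    (C : ℕ → ℝ) (hC : ∀ j, ∀ t : ℝ, 0 < t → |iteratedDerivWithin j f (Set.Ioi 0) t| ≤ C j)
    (s : ℂ) (hs : 0 < s.re) (n : ℕ) :
    ∫ t in Set.Ioc (0:ℝ) 3, ((f t : ℝ) : ℂ) * (t:ℂ) ^ (s - 1)
      = (∏ j ∈ Finset.range n, -(s + (j:ℂ))⁻¹) * ∫ t in Set.Ioc (0:ℝ) 3,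
          ((iteratedDerivWithin n f (Set.Ioi 0) t : ℝ) : ℂ) * (t:ℂ) ^ (s + (n:ℕ) - 1) := by
  induction n with
  | zero =>
    simp [iteratedDerivWithin_zero]
  | succ n ih =>
    rw [ih, mellin_ibp f hg3 hsm C hC s hs n, Finset.prod_range_succ]
    ring

private lemma mellin_bound (f : ℝ → ℝ) (U : ℝ) (hU : 1 ≤ U)
    (hsm : ContDiffOn ℝ (⊤ : ℕ∞) f (Set.Ioi 0))
    (hone : ∀ t : ℝ, 0 < t → t ≤ 1 - 1/U → f t = 1)
    (hzero : ∀ t : ℝ, 1 + 1/U ≤ t → f t = 0)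
    (C : ℕ → ℝ) (hC : ∀ j, ∀ t : ℝ, 0 < t → |iteratedDerivWithin j f (Set.Ioi 0) t| ≤ C j)
    (s : ℂ) (hs1 : 0 < s.re) (σ2 : ℝ) (hs2 : s.re ≤ σ2)
    (n : ℕ) (hn : 1 ≤ n) :
    ‖∫ t in Set.Ioi (0:ℝ), ((f t : ℝ) : ℂ) * (t:ℂ) ^ (s - 1)‖
      ≤ (∏ j ∈ Finset.range n, ‖s + (j:ℂ)‖⁻¹) * (C n * (2:ℝ) ^ (σ2 + n) * (2 / U)) := by
  have hU0 : (0:ℝ) < U := lt_of_lt_of_le one_pos hU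
  have hU1 : 1/U ≤ 1 := by rw [div_le_one hU0]; exact hU
  have hU1' : 0 < 1/U := by positivity
  have hb2 : 1 + 1/U ≤ 2 := by linarith
  have hcont : ∀ j, ContinuousOn (iteratedDerivWithin j f (Set.Ioi 0)) (Set.Ioi 0) := fun j =>
    hsm.continuousOn_iteratedDerivWithin (by exact_mod_cast le_top) isOpen_Ioi.uniqueDiffOn
  have hg3 : ∀ k : ℕ, iteratedDerivWithin k f (Set.Ioi 0) 3 = 0 := by
    intro k
    cases k with
    | zero => simpa [iteratedDerivWithin_zero] using hzero 3 (by linarith)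
    | succ m =>
      refine iterDW_eq_zero_of_const hsm (isOpen_Ioi (a := 1 + 1/U)) ?_ (c := 0)
        (fun x hx => hzero x (le_of_lt hx)) m 3 ?_
      · exact fun x hx => lt_trans (show (0:ℝ) < 1 + 1/U by positivity) hx
      · exact lt_of_le_of_lt hb2 (by norm_num)
  have hCn : 0 ≤ C n := le_trans (abs_nonneg _) (hC n 3 (by norm_num))
  -- conversion to Ioc 0 3
  have hconv : (∫ t in Set.Ioi (0:ℝ), ((f t : ℝ) : ℂ) * (t:ℂ) ^ (s - 1))
      = ∫ t in Set.Ioc (0:ℝ) 3, ((f t : ℝ) : ℂ) * (t:ℂ) ^ (s - 1) := by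
    refine setIntegral_eq_of_zero_off measurableSet_Ioi measurableSet_Ioc
      Set.Ioc_subset_Ioi_self (fun t ht htQ => ?_)
    have h3t : (3:ℝ) < t := by
      rcases lt_or_ge 3 t with h | h
      · exact h
      · exact absurd ⟨ht, h⟩ htQ
    rw [hzero t (by linarith)]
    simp
  rw [hconv, mellin_ibp_iter f hg3 hsm C hC s hs1 n]
  rw [norm_mul]
  have hprod : ‖∏ j ∈ Finset.range n, -(s + (j:ℂ))⁻¹‖
      = ∏ j ∈ Finset.range n, ‖s + (j:ℂ)‖⁻¹ := by
    rw [norm_prod]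
    exact Finset.prod_congr rfl (fun j _ => by rw [norm_neg, norm_inv])
  rw [hprod]
  refine mul_le_mul_of_nonneg_left ?_ (Finset.prod_nonneg (fun j _ => by positivity))
  -- bound the n-th integral
  set Q : Set ℝ := Set.Icc (1 - 1/U) (1 + 1/U) ∩ Set.Ioi 0 with hQdef
  have hQm : MeasurableSet Q := (measurableSet_Icc).inter measurableSet_Ioi
  have hQsub : Q ⊆ Set.Ioc (0:ℝ) 3 := by
    rintro t ⟨⟨h1, h2⟩, h3⟩
    exact ⟨h3, by linarith⟩
  obtain ⟨m, rfl⟩ : ∃ m, n = m + 1 := ⟨n - 1, (Nat.succ_pred_eq_of_pos hn).symm⟩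
  have hJQ : (∫ t in Set.Ioc (0:ℝ) 3,
        ((iteratedDerivWithin (m+1) f (Set.Ioi 0) t : ℝ) : ℂ) * (t:ℂ) ^ (s + (m+1:ℕ) - 1))
      = ∫ t in Q, ((iteratedDerivWithin (m+1) f (Set.Ioi 0) t : ℝ) : ℂ)
          * (t:ℂ) ^ (s + (m+1:ℕ) - 1) := by
    refine setIntegral_eq_of_zero_off measurableSet_Ioc hQm hQsub (fun t ht htQ => ?_)
    have ht0 : 0 < t := ht.1
    have : t < 1 - 1/U ∨ 1 + 1/U < t := by
      by_contra hcon
      push_neg at hcon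
      exact htQ ⟨⟨hcon.1, hcon.2⟩, ht0⟩
    rcases this with h | h
    · have hzero' : iteratedDerivWithin (m+1) f (Set.Ioi 0) t = 0 := by
        refine iterDW_eq_zero_of_const hsm (isOpen_Ioo (a := 0) (b := 1 - 1/U))
          (fun x hx => hx.1) (c := 1) (fun x hx => hone x hx.1 hx.2.le) m t ⟨ht0, h⟩
      rw [hzero']; simp
    · have hzero' : iteratedDerivWithin (m+1) f (Set.Ioi 0) t = 0 := by
        refine iterDW_eq_zero_of_const hsm (isOpen_Ioi (a := 1 + 1/U))
          (fun x hx => lt_trans (show (0:ℝ) < 1 + 1/U by positivity) hx) (c := 0)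
          (fun x hx => hzero x hx.le) m t h
      rw [hzero']; simp
  rw [hJQ]
  have hμQ : volume Q ≤ ENNReal.ofReal (2/U) := by
    calc volume Q ≤ volume (Set.Icc (1 - 1/U) (1 + 1/U)) :=
          measure_mono Set.inter_subset_left
      _ = ENNReal.ofReal (2/U) := by
          rw [Real.volume_Icc]
          congr 1
          ring
  have hμQfin : volume Q < ⊤ := lt_of_le_of_lt hμQ ENNReal.ofReal_lt_top
  have hbound : ∀ t ∈ Q, ‖((iteratedDerivWithin (m+1) f (Set.Ioi 0) t : ℝ) : ℂ)
      * (t:ℂ) ^ (s + (m+1:ℕ) - 1)‖ ≤ C (m+1) * (2:ℝ) ^ (σ2 + (m+1:ℕ)) := by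
    rintro t ⟨⟨h1, h2⟩, h3⟩
    have ht0 : (0:ℝ) < t := h3
    have ht2 : t ≤ 2 := by linarith
    have hrepos : (0:ℝ) ≤ (s + (m+1:ℕ) - 1).re := by
      simp only [Complex.sub_re, Complex.add_re, Complex.natCast_re, Complex.one_re]
      push_cast
      linarith [Nat.cast_nonneg (α := ℝ) m]
    rw [norm_mul, Complex.norm_real,
      Complex.norm_cpow_eq_rpow_re_of_pos ht0]
    have h4 : t ^ (s + (m+1:ℕ) - 1).re ≤ (2:ℝ) ^ (σ2 + (m+1:ℕ)) := by
      calc t ^ (s + (m+1:ℕ) - 1).re ≤ (2:ℝ) ^ (s + (m+1:ℕ) - 1).re :=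
            Real.rpow_le_rpow ht0.le ht2 hrepos
        _ ≤ (2:ℝ) ^ (σ2 + (m+1:ℕ)) := by
            refine Real.rpow_le_rpow_of_exponent_le one_le_two ?_
            simp only [Complex.sub_re, Complex.add_re, Complex.natCast_re, Complex.one_re]
            push_cast
            linarith
    exact mul_le_mul (hC (m+1) t ht0) h4 (Real.rpow_nonneg ht0.le _) hCn
  have hmeas : AEStronglyMeasurable
      (fun t : ℝ => ((iteratedDerivWithin (m+1) f (Set.Ioi 0) t : ℝ) : ℂ)
        * (t:ℂ) ^ (s + (m+1:ℕ) - 1)) (volume.restrict Q) := by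
    refine ContinuousOn.aestronglyMeasurable ?_ hQm
    refine ContinuousOn.mul ?_ ?_
    · exact (Complex.continuous_ofReal.comp_continuousOn
        ((hcont (m+1)).mono Set.inter_subset_right))
    · intro t ht
      exact (Complex.continuousAt_ofReal_cpow_const t _
        (Or.inr (ne_of_gt ht.2))).continuousWithinAt
  calc ‖∫ t in Q, ((iteratedDerivWithin (m+1) f (Set.Ioi 0) t : ℝ) : ℂ)
        * (t:ℂ) ^ (s + (m+1:ℕ) - 1)‖
      ≤ C (m+1) * (2:ℝ) ^ (σ2 + (m+1:ℕ)) * (volume Q).toReal :=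
        norm_setIntegral_le_of_norm_le_const hμQfin hbound
    _ ≤ C (m+1) * (2:ℝ) ^ (σ2 + (m+1:ℕ)) * (2/U) := by
        refine mul_le_mul_of_nonneg_left ?_ (by positivity)
        calc (volume Q).toReal ≤ (ENNReal.ofReal (2/U)).toReal :=
              ENNReal.toReal_mono ENNReal.ofReal_ne_top hμQ
          _ = 2/U := ENNReal.toReal_ofReal (by positivity)

set_option maxHeartbeats 800000 in
private lemma mellin_diff_bound (f : ℝ → ℝ) (U : ℝ) (hU : 2 ≤ U)
    (hsm : ContDiffOn ℝ (⊤ : ℕ∞) f (Set.Ioi 0))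
    (hmono : ∀ t1 t2 : ℝ, 0 < t1 → t1 ≤ t2 → f t2 ≤ f t1)
    (hone : ∀ t : ℝ, 0 < t → t ≤ 1 - 1/U → f t = 1)
    (hzero : ∀ t : ℝ, 1 + 1/U ≤ t → f t = 0)
    (B : ℝ) (hB : ∀ t : ℝ, 0 < t → |f t| ≤ B)
    (s : ℂ) (σ2 : ℝ) (hs1 : 0 < s.re) (hs2 : s.re ≤ σ2) :
    ‖(∫ t in Set.Ioi (0:ℝ), ((f t : ℝ) : ℂ) * (t:ℂ) ^ (s - 1)) - 1 / s‖
      ≤ (2:ℝ) ^ (σ2 + 1) * (2 / U) := by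
  have hU0 : (0:ℝ) < U := by linarith
  have hU1 : 1/U ≤ 1/2 := by
    rw [div_le_div_iff₀ hU0 (by norm_num)]; linarith
  have hU1' : 0 < 1/U := by positivity
  have ha : (1:ℝ)/2 ≤ 1 - 1/U := by linarith
  have hb2 : 1 + 1/U ≤ 2 := by linarith
  have hcf : ContinuousOn f (Set.Ioi 0) := hsm.continuousOn
  have hre : (-1:ℝ) < (s - 1).re := by
    simp only [Complex.sub_re, Complex.one_re]; linarith
  -- integrability of the mellin integrand of f
  have int_f : IntegrableOn (fun t : ℝ => ((f t : ℝ) : ℂ) * (t:ℂ) ^ (s - 1)) (Set.Ioi 0) := by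
    have i1 : IntegrableOn (fun t : ℝ => ((f t : ℝ) : ℂ) * (t:ℂ) ^ (s - 1)) (Set.Ioc 0 3) :=
      integrableOn_mul_cpow hcf (fun t ht => hB t ht) hre
    have i2 : IntegrableOn (fun t : ℝ => ((f t : ℝ) : ℂ) * (t:ℂ) ^ (s - 1)) (Set.Ioi 3) := by
      rw [integrableOn_congr_fun (g := fun _ => (0:ℂ))
        (fun t ht => by
          simp only [Set.mem_Ioi] at ht
          simp [hzero t (by linarith)]) measurableSet_Ioi]
      exact integrableOn_zero
    have := i1.union i2
    rwa [Set.Ioc_union_Ioi_eq_Ioi (by norm_num : (0:ℝ) ≤ 3)] at this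
  -- the indicator integral
  have hMell := hasMellin_one_Ioc (s := s) hs1
  have int_ind : IntegrableOn
      (fun t : ℝ => (t:ℂ) ^ (s - 1) • Set.indicator (Set.Ioc 0 1) (fun _ => (1:ℂ)) t)
      (Set.Ioi 0) := hMell.1
  have h1s : 1 / s = ∫ t in Set.Ioi (0:ℝ),
      (t:ℂ) ^ (s - 1) • Set.indicator (Set.Ioc 0 1) (fun _ => (1:ℂ)) t := by
    rw [← hMell.2]; rfl
  rw [h1s, ← integral_sub int_f int_ind]
  have hsingle : ∀ t ∈ Set.Ioi (0:ℝ),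
      ((f t : ℝ) : ℂ) * (t:ℂ) ^ (s - 1)
        - (t:ℂ) ^ (s - 1) • Set.indicator (Set.Ioc 0 1) (fun _ => (1:ℂ)) t
      = (((f t : ℝ) : ℂ) - Set.indicator (Set.Ioc 0 1) (fun _ => (1:ℂ)) t) * (t:ℂ) ^ (s - 1) := by
    intro t _
    rw [smul_eq_mul]; ring
  rw [setIntegral_congr_fun measurableSet_Ioi hsingle]
  set Q : Set ℝ := Set.Icc (1 - 1/U) (1 + 1/U) with hQdef
  have hQsub : Q ⊆ Set.Ioi (0:ℝ) := fun t ht => lt_of_lt_of_le (by linarith) ht.1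
  have hQrw : (∫ t in Set.Ioi (0:ℝ),
      (((f t : ℝ) : ℂ) - Set.indicator (Set.Ioc 0 1) (fun _ => (1:ℂ)) t) * (t:ℂ) ^ (s - 1))
      = ∫ t in Q,
      (((f t : ℝ) : ℂ) - Set.indicator (Set.Ioc 0 1) (fun _ => (1:ℂ)) t) * (t:ℂ) ^ (s - 1) := by
    refine setIntegral_eq_of_zero_off measurableSet_Ioi measurableSet_Icc hQsub
      (fun t ht htQ => ?_)
    have ht0 : (0:ℝ) < t := ht
    have : t < 1 - 1/U ∨ 1 + 1/U < t := by
      by_contra hcon; push_neg at hcon; exact htQ (Set.mem_Icc.2 ⟨hcon.1, hcon.2⟩)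
    rcases this with h | h
    · rw [hone t ht0 h.le, Set.indicator_of_mem (Set.mem_Ioc.2 ⟨ht0, by linarith⟩)]
      simp
    · rw [hzero t h.le, Set.indicator_of_notMem (fun hmem => by
        have := (Set.mem_Ioc.1 hmem).2; linarith)]
      simp
  rw [hQrw]
  have hμQ : volume Q = ENNReal.ofReal (2/U) := by
    rw [hQdef, Real.volume_Icc]; congr 1; ring
  have hμQfin : volume Q < ⊤ := by rw [hμQ]; exact ENNReal.ofReal_lt_top
  have hbound : ∀ t ∈ Q,
      ‖(((f t : ℝ) : ℂ) - Set.indicator (Set.Ioc 0 1) (fun _ => (1:ℂ)) t) * (t:ℂ) ^ (s - 1)‖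
        ≤ (2:ℝ) ^ (σ2 + 1) := by
    intro t htQ
    obtain ⟨h1, h2⟩ := Set.mem_Icc.1 htQ
    have ht0 : (0:ℝ) < t := lt_of_lt_of_le (by linarith) h1
    have hthalf : (1:ℝ)/2 ≤ t := le_trans ha h1
    have ht2 : t ≤ 2 := le_trans h2 hb2
    have hf1 : f t ≤ 1 := by
      have := hmono (1 - 1/U) t (by linarith) h1
      rwa [hone (1 - 1/U) (by linarith) le_rfl] at this
    have hf0 : 0 ≤ f t := by
      have := hmono t (1 + 1/U) ht0 h2
      rwa [hzero (1 + 1/U) le_rfl] at this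
    have hfac1 : ‖((f t : ℝ) : ℂ) - Set.indicator (Set.Ioc 0 1) (fun _ => (1:ℂ)) t‖ ≤ 1 := by
      by_cases hmem : t ∈ Set.Ioc (0:ℝ) 1
      · rw [Set.indicator_of_mem hmem]
        have : ((f t : ℝ) : ℂ) - 1 = ((f t - 1 : ℝ) : ℂ) := by push_cast; ring
        rw [this, Complex.norm_real, Real.norm_eq_abs]
        rw [abs_le]; constructor <;> linarith
      · rw [Set.indicator_of_notMem hmem, sub_zero, Complex.norm_real, Real.norm_eq_abs]
        rw [abs_le]; constructor <;> linarith
    have hfac2 : ‖(t:ℂ) ^ (s - 1)‖ ≤ (2:ℝ) ^ (σ2 + 1) := by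
      rw [Complex.norm_cpow_eq_rpow_re_of_pos ht0]
      have hrev : (s - 1).re = s.re - 1 := by
        simp [Complex.sub_re, Complex.one_re]
      rw [hrev]
      rcases le_or_gt 0 (s.re - 1) with hp | hp
      · calc t ^ (s.re - 1) ≤ (2:ℝ) ^ (s.re - 1) := Real.rpow_le_rpow ht0.le ht2 hp
          _ ≤ (2:ℝ) ^ (σ2 + 1) := Real.rpow_le_rpow_of_exponent_le one_le_two (by linarith)
      · calc t ^ (s.re - 1) ≤ ((1:ℝ)/2) ^ (s.re - 1) :=
              Real.rpow_le_rpow_of_nonpos (by norm_num) hthalf hp.le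
          _ = (2:ℝ) ^ (1 - s.re) := by
              rw [one_div, Real.inv_rpow (by norm_num : (0:ℝ) ≤ 2),
                ← Real.rpow_neg (by norm_num : (0:ℝ) ≤ 2)]
              ring_nf
          _ ≤ (2:ℝ) ^ (σ2 + 1) := Real.rpow_le_rpow_of_exponent_le one_le_two (by linarith)
    calc ‖(((f t : ℝ) : ℂ) - Set.indicator (Set.Ioc 0 1) (fun _ => (1:ℂ)) t) * (t:ℂ) ^ (s - 1)‖
        = ‖((f t : ℝ) : ℂ) - Set.indicator (Set.Ioc 0 1) (fun _ => (1:ℂ)) t‖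
            * ‖(t:ℂ) ^ (s - 1)‖ := norm_mul _ _
      _ ≤ 1 * ((2:ℝ) ^ (σ2 + 1)) := mul_le_mul hfac1 hfac2 (norm_nonneg _) one_pos.le
      _ = (2:ℝ) ^ (σ2 + 1) := one_mul _
  have hmeas : AEStronglyMeasurable
      (fun t : ℝ => (((f t : ℝ) : ℂ) - Set.indicator (Set.Ioc 0 1) (fun _ => (1:ℂ)) t)
        * (t:ℂ) ^ (s - 1)) (volume.restrict Q) := by
    refine AEStronglyMeasurable.mul (AEStronglyMeasurable.sub ?_ ?_) ?_
    · exact (Complex.continuous_ofReal.comp_continuousOn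
        (hcf.mono hQsub)).aestronglyMeasurable measurableSet_Icc
    · exact (stronglyMeasurable_const.indicator measurableSet_Ioc).aestronglyMeasurable
    · refine ContinuousOn.aestronglyMeasurable ?_ measurableSet_Icc
      intro t ht
      exact (Complex.continuousAt_ofReal_cpow_const t _
        (Or.inr (ne_of_gt (hQsub ht)))).continuousWithinAt
  calc ‖∫ t in Q, (((f t : ℝ) : ℂ) - Set.indicator (Set.Ioc 0 1) (fun _ => (1:ℂ)) t)
        * (t:ℂ) ^ (s - 1)‖
      ≤ (2:ℝ) ^ (σ2 + 1) * (volume Q).toReal :=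
        norm_setIntegral_le_of_norm_le_const hμQfin hbound
    _ = (2:ℝ) ^ (σ2 + 1) * (2/U) := by
        rw [hμQ, ENNReal.toReal_ofReal (by positivity)]

private lemma mellin_bound2 (f : ℝ → ℝ) (U : ℝ) (hU : 1 ≤ U)
    (hsm : ContDiffOn ℝ (⊤ : ℕ∞) f (Set.Ioi 0))
    (hone : ∀ t : ℝ, 0 < t → t ≤ 1 - 1/U → f t = 1)
    (hzero : ∀ t : ℝ, 1 + 1/U ≤ t → f t = 0)
    (C : ℕ → ℝ) (hC : ∀ j, ∀ t : ℝ, 0 < t → |iteratedDerivWithin j f (Set.Ioi 0) t| ≤ C j * U ^ j)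
    (hC0 : ∀ j, 0 ≤ C j)
    (s : ℂ) (σ2 : ℝ) (hs1 : 0 < s.re) (hs2 : s.re ≤ σ2)
    (m : ℕ) (hm : 1 ≤ m) (hsm2 : 2 * m ≤ ‖s‖) :
    ‖∫ t in Set.Ioi (0:ℝ), ((f t : ℝ) : ℂ) * (t:ℂ) ^ (s - 1)‖
      ≤ (C m * (2:ℝ) ^ (σ2 + m) * 2 * 2 ^ m) * U ^ (m - 1) / ‖s‖ ^ m := by
  have hU0 : (0:ℝ) < U := lt_of_lt_of_le one_pos hU
  have hs0 : (0:ℝ) < ‖s‖ := lt_of_lt_of_le (by positivity) hsm2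
  have hmain := mellin_bound f U hU hsm hone hzero (fun j => C j * U ^ j)
    (fun j t ht => hC j t ht) s hs1 σ2 hs2 m hm
  have hprod : (∏ j ∈ Finset.range m, ‖s + (j:ℂ)‖⁻¹) ≤ (2 / ‖s‖) ^ m := by
    have hj : ∀ j ∈ Finset.range m, ‖s + (j:ℂ)‖⁻¹ ≤ 2 / ‖s‖ := by
      intro j hj
      have hjm : (j:ℝ) ≤ m - 1 := by
        have := Finset.mem_range.1 hj
        have : (j:ℝ) ≤ (m:ℝ) - 1 := by
          have hj' : (j:ℝ) + 1 ≤ (m:ℝ) := by exact_mod_cast this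
          linarith
        linarith
      have hlow : ‖s‖ - j ≤ ‖s + (j:ℂ)‖ := by
        have h1 : ‖s‖ ≤ ‖s + (j:ℂ)‖ + ‖((j:ℂ))‖ := by
          calc ‖s‖ = ‖(s + (j:ℂ)) + (-(j:ℂ))‖ := by ring_nf
            _ ≤ ‖s + (j:ℂ)‖ + ‖(-(j:ℂ))‖ := norm_add_le _ _
            _ = ‖s + (j:ℂ)‖ + ‖((j:ℂ))‖ := by rw [norm_neg]
        have h2 : ‖((j:ℂ))‖ = (j:ℝ) := by
          rw [Complex.norm_natCast]
        linarith
      have hhalf : ‖s‖ / 2 ≤ ‖s + (j:ℂ)‖ := by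
        have : (j:ℝ) ≤ ‖s‖ / 2 := by
          have : (m:ℝ) ≤ ‖s‖ / 2 := by linarith
          have hm1 : (j:ℝ) ≤ (m:ℝ) := by linarith
          linarith
        linarith
      have hpos : (0:ℝ) < ‖s‖ / 2 := by positivity
      calc ‖s + (j:ℂ)‖⁻¹ ≤ (‖s‖ / 2)⁻¹ := by
            exact inv_anti₀ hpos hhalf
        _ = 2 / ‖s‖ := by field_simp
    calc (∏ j ∈ Finset.range m, ‖s + (j:ℂ)‖⁻¹)
        ≤ ∏ _j ∈ Finset.range m, (2 / ‖s‖) :=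
          Finset.prod_le_prod (fun j _ => by positivity) hj
      _ = (2 / ‖s‖) ^ m := by rw [Finset.prod_const, Finset.card_range]
  have hrhs0 : (0:ℝ) ≤ C m * U ^ m * (2:ℝ) ^ (σ2 + m) * (2 / U) := by
    have := hC0 m
    positivity
  calc ‖∫ t in Set.Ioi (0:ℝ), ((f t : ℝ) : ℂ) * (t:ℂ) ^ (s - 1)‖
      ≤ (∏ j ∈ Finset.range m, ‖s + (j:ℂ)‖⁻¹) * (C m * U ^ m * (2:ℝ) ^ (σ2 + m) * (2 / U)) :=
        hmain
    _ ≤ (2 / ‖s‖) ^ m * (C m * U ^ m * (2:ℝ) ^ (σ2 + m) * (2 / U)) :=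
        mul_le_mul_of_nonneg_right hprod hrhs0
    _ = (C m * (2:ℝ) ^ (σ2 + m) * 2 * 2 ^ m) * U ^ (m - 1) / ‖s‖ ^ m := by
        have hUm : U ^ m = U ^ (m - 1) * U := by
          rw [← pow_succ]
          congr 1
          omega
        rw [div_pow, hUm]
        have hU2 : U * (2 / U) = 2 := by field_simp
        calc (2 ^ m / ‖s‖ ^ m) * (C m * (U ^ (m-1) * U) * (2:ℝ) ^ (σ2 + m) * (2 / U))
            = (2 ^ m / ‖s‖ ^ m) * (C m * U ^ (m-1) * (2:ℝ) ^ (σ2 + m) * (U * (2 / U))) := by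
              ring
          _ = (2 ^ m / ‖s‖ ^ m) * (C m * U ^ (m-1) * (2:ℝ) ^ (σ2 + m) * 2) := by rw [hU2]
          _ = C m * (2:ℝ) ^ (σ2 + m) * 2 * 2 ^ m * U ^ (m - 1) / ‖s‖ ^ m := by ring


/-- Let `ψ_U : ℝ₊ → ℝ`, `U ≥ U₀`, be a family of smooth non-increasing
functions with `ψ_U ≡ 1` on `(0, 1−1/U]`, `ψ_U ≡ 0` on `[1+1/U, ∞)`, and
`ψ_U^{(j)} = O(U^j)`.  Let `M_U(s) = ∫₀^∞ ψ_U(t) t^{s−1} dt` be the Mellin transform.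
Then, uniformly for `Re s` in a fixed bounded interval `[σ₁, σ₂] ⊂ (0,∞)`:
(i) `M_U(s) = 1/s + O(1/U)` as `U → ∞`, and
(ii) for every `c > 0`, `M_U(s) = O(|s|⁻¹ (U/(1+|s|))^c)` as `|s| → ∞`. -/
theorem mellin_transform_estimates (U0 : ℝ) (hU0 : 1 ≤ U0) (ψ : ℝ → ℝ → ℝ)
    (hsmooth : ∀ U : ℝ, U0 ≤ U → ContDiffOn ℝ (⊤ : ℕ∞) (ψ U) (Set.Ioi 0))
    (hmono : ∀ U : ℝ, U0 ≤ U → ∀ t1 t2 : ℝ, 0 < t1 → t1 ≤ t2 → ψ U t2 ≤ ψ U t1)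
    (hone : ∀ U : ℝ, U0 ≤ U → ∀ t : ℝ, 0 < t → t ≤ 1 - 1 / U → ψ U t = 1)
    (hzero : ∀ U : ℝ, U0 ≤ U → ∀ t : ℝ, 1 + 1 / U ≤ t → ψ U t = 0)
    (hderiv : ∀ j : ℕ, ∃ Cj : ℝ, ∀ U : ℝ, U0 ≤ U → ∀ t : ℝ, 0 < t →
      |iteratedDerivWithin j (ψ U) (Set.Ioi 0) t| ≤ Cj * U ^ j)
    (σ1 σ2 : ℝ) (hσ1 : 0 < σ1) (hσ12 : σ1 ≤ σ2) :
    (∃ C U1 : ℝ, ∀ U : ℝ, U0 ≤ U → U1 ≤ U → ∀ s : ℂ, σ1 ≤ s.re → s.re ≤ σ2 →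
      ‖(∫ t in Set.Ioi (0 : ℝ), ((ψ U t : ℝ) : ℂ) * (t : ℂ) ^ (s - 1)) - 1 / s‖ ≤ C / U) ∧
    (∀ c : ℝ, 0 < c → ∃ C T : ℝ, ∀ U : ℝ, U0 ≤ U → ∀ s : ℂ, σ1 ≤ s.re → s.re ≤ σ2 →
      T ≤ ‖s‖ →
      ‖∫ t in Set.Ioi (0 : ℝ), ((ψ U t : ℝ) : ℂ) * (t : ℂ) ^ (s - 1)‖
        ≤ C * ‖s‖⁻¹ * (U / (1 + ‖s‖)) ^ c) := by
  choose Cf hCf using hderiv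
  have hU0pos : (0:ℝ) < U0 := lt_of_lt_of_le one_pos hU0
  have hCf0 : ∀ j, 0 ≤ Cf j := by
    intro j
    have h1 := hCf j U0 le_rfl 1 one_pos
    nlinarith [abs_nonneg (iteratedDerivWithin j (ψ U0) (Set.Ioi 0) 1),
      pow_pos hU0pos j]
  constructor
  · -- part (i)
    refine ⟨2 * (2:ℝ) ^ (σ2 + 1), 2, fun U hUU0 hU2 s hs1 hs2 => ?_⟩
    have hs1' : 0 < s.re := lt_of_lt_of_le hσ1 hs1
    have := mellin_diff_bound (ψ U) U hU2 (hsmooth U hUU0) (hmono U hUU0)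
      (hone U hUU0) (hzero U hUU0) (Cf 0)
      (fun t ht => by simpa using hCf 0 U hUU0 t ht)
      s σ2 hs1' hs2
    calc ‖(∫ t in Set.Ioi (0 : ℝ), ((ψ U t : ℝ) : ℂ) * (t : ℂ) ^ (s - 1)) - 1 / s‖
        ≤ (2:ℝ) ^ (σ2 + 1) * (2 / U) := this
      _ = 2 * (2:ℝ) ^ (σ2 + 1) / U := by ring
  · -- part (ii)
    intro c hc
    set n : ℕ := ⌈c⌉₊ + 1 with hn
    have hn1 : 1 ≤ n := by omega
    have hceil : 1 ≤ ⌈c⌉₊ := Nat.one_le_ceil_iff.2 hc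
    set E : ℕ → ℝ := fun m => Cf m * (2:ℝ) ^ (σ2 + m) * 2 * 2 ^ m with hE
    have hE0 : ∀ m, 0 ≤ E m := by
      intro m
      have := hCf0 m
      positivity
    refine ⟨E 1 * (2:ℝ) ^ c + E n * 2 ^ (n - 1), 2 * n, fun U hUU0 s hs1 hs2 hT => ?_⟩
    have hU1 : (1:ℝ) ≤ U := le_trans hU0 hUU0
    have hU0' : (0:ℝ) < U := lt_of_lt_of_le one_pos hU1
    have hs1' : 0 < s.re := lt_of_lt_of_le hσ1 hs1
    have key : ∀ m : ℕ, 1 ≤ m → 2 * m ≤ ‖s‖ →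
        ‖∫ t in Set.Ioi (0:ℝ), ((ψ U t : ℝ) : ℂ) * (t:ℂ) ^ (s - 1)‖
          ≤ E m * U ^ (m - 1) / ‖s‖ ^ m := fun m hm hsm2 =>
      mellin_bound2 (ψ U) U hU1 (hsmooth U hUU0) (hone U hUU0) (hzero U hUU0)
        Cf (fun j t ht => hCf j U hUU0 t ht) hCf0 s σ2 hs1' hs2 m hm hsm2
    have hs2n : 2 * (n:ℝ) ≤ ‖s‖ := hT
    have hn2 : (2:ℝ) ≤ (n:ℝ) := by exact_mod_cast (by omega : 2 ≤ n)
    have hsnorm1 : (1:ℝ) ≤ ‖s‖ := by linarith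
    have hspos : (0:ℝ) < ‖s‖ := by linarith
    have hx0 : (0:ℝ) < U / (1 + ‖s‖) := by positivity
    have hxc0 : (0:ℝ) < (U / (1 + ‖s‖)) ^ c := Real.rpow_pos_of_pos hx0 c
    rcases le_or_gt U ‖s‖ with hcase | hcase
    · -- U ≤ ‖s‖ : use m = n
      have hb := key n hn1 hs2n
      have hx1 : U / (1 + ‖s‖) ≤ 1 := by
        rw [div_le_one (by positivity)]
        linarith
      have hdiv2 : U / ‖s‖ ≤ 2 * (U / (1 + ‖s‖)) := by
        rw [div_le_iff₀ hspos, mul_comm 2 (U / (1 + ‖s‖)), mul_assoc, div_mul_eq_mul_div,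
          le_div_iff₀ (by positivity : (0:ℝ) < 1 + ‖s‖)]
        nlinarith
      have heq : E n * U ^ (n - 1) / ‖s‖ ^ n
          = E n * ‖s‖⁻¹ * (U / ‖s‖) ^ (n - 1) := by
        have hsn : ‖s‖ ^ n = ‖s‖ ^ (n - 1) * ‖s‖ := by
          rw [← pow_succ, Nat.sub_add_cancel hn1]
        rw [div_pow, hsn]
        field_simp
      have hpow1 : (U / ‖s‖) ^ (n - 1) ≤ (2 * (U / (1 + ‖s‖))) ^ (n - 1) :=
        pow_le_pow_left₀ (by positivity) hdiv2 (n - 1)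
      have hpow2 : (2 * (U / (1 + ‖s‖))) ^ (n - 1)
          = 2 ^ (n - 1) * (U / (1 + ‖s‖)) ^ (n - 1) := mul_pow _ _ _
      have hpow3 : (U / (1 + ‖s‖)) ^ (n - 1) ≤ (U / (1 + ‖s‖)) ^ c := by
        rw [← Real.rpow_natCast (U / (1 + ‖s‖)) (n - 1)]
        refine Real.rpow_le_rpow_of_exponent_ge hx0 hx1 ?_
        have h' : (n - 1 : ℕ) = ⌈c⌉₊ := by omega
        rw [h']
        exact Nat.le_ceil c
      calc ‖∫ t in Set.Ioi (0:ℝ), ((ψ U t : ℝ) : ℂ) * (t:ℂ) ^ (s - 1)‖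
          ≤ E n * U ^ (n - 1) / ‖s‖ ^ n := hb
        _ = E n * ‖s‖⁻¹ * (U / ‖s‖) ^ (n - 1) := heq
        _ ≤ E n * ‖s‖⁻¹ * (2 ^ (n - 1) * (U / (1 + ‖s‖)) ^ c) := by
            refine mul_le_mul_of_nonneg_left ?_
              (mul_nonneg (hE0 n) (inv_nonneg.2 hspos.le))
            calc (U / ‖s‖) ^ (n - 1) ≤ 2 ^ (n - 1) * (U / (1 + ‖s‖)) ^ (n - 1) := by
                  rw [← hpow2]; exact hpow1
              _ ≤ 2 ^ (n - 1) * (U / (1 + ‖s‖)) ^ c := by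
                  exact mul_le_mul_of_nonneg_left hpow3 (by positivity)
        _ = (E n * 2 ^ (n - 1)) * ‖s‖⁻¹ * (U / (1 + ‖s‖)) ^ c := by ring
        _ ≤ (E 1 * (2:ℝ) ^ c + E n * 2 ^ (n - 1)) * ‖s‖⁻¹ * (U / (1 + ‖s‖)) ^ c := by
            refine mul_le_mul_of_nonneg_right (mul_le_mul_of_nonneg_right ?_ (by positivity))
              (le_of_lt hxc0)
            have h1 : (0:ℝ) ≤ E 1 * (2:ℝ) ^ c :=
              mul_nonneg (hE0 1) (Real.rpow_nonneg (by norm_num) c)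
            linarith
    · -- ‖s‖ < U : use m = 1
      have hb := key 1 le_rfl (by push_cast; linarith)
      have hhalf : (1:ℝ)/2 ≤ U / (1 + ‖s‖) := by
        rw [div_le_div_iff₀ (by norm_num) (by positivity)]
        linarith
      have hxc : ((1:ℝ)/2) ^ c ≤ (U / (1 + ‖s‖)) ^ c :=
        Real.rpow_le_rpow (by norm_num) hhalf hc.le
      have hhalfc : ((1:ℝ)/2) ^ c = ((2:ℝ) ^ c)⁻¹ := by
        rw [one_div, Real.inv_rpow (by norm_num : (0:ℝ) ≤ 2)]
      have h2c : (0:ℝ) < (2:ℝ) ^ c := Real.rpow_pos_of_pos (by norm_num) c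
      calc ‖∫ t in Set.Ioi (0:ℝ), ((ψ U t : ℝ) : ℂ) * (t:ℂ) ^ (s - 1)‖
          ≤ E 1 * U ^ (1 - 1) / ‖s‖ ^ 1 := hb
        _ = E 1 * ‖s‖⁻¹ := by simp [div_eq_mul_inv]
        _ = (E 1 * (2:ℝ) ^ c) * ‖s‖⁻¹ * ((2:ℝ) ^ c)⁻¹ := by
            have hcancel : (2:ℝ) ^ c * ((2:ℝ) ^ c)⁻¹ = 1 := mul_inv_cancel₀ (ne_of_gt h2c)
            calc E 1 * ‖s‖⁻¹ = E 1 * ((2:ℝ) ^ c * ((2:ℝ) ^ c)⁻¹) * ‖s‖⁻¹ := by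
                  rw [hcancel]; ring
              _ = (E 1 * (2:ℝ) ^ c) * ‖s‖⁻¹ * ((2:ℝ) ^ c)⁻¹ := by ring
        _ ≤ (E 1 * (2:ℝ) ^ c) * ‖s‖⁻¹ * (U / (1 + ‖s‖)) ^ c := by
            refine mul_le_mul_of_nonneg_left ?_
              (mul_nonneg (mul_nonneg (hE0 1) (Real.rpow_nonneg (by norm_num) c))
                (inv_nonneg.2 hspos.le))
            rw [← hhalfc]
            exact hxc
        _ ≤ (E 1 * (2:ℝ) ^ c + E n * 2 ^ (n - 1)) * ‖s‖⁻¹ * (U / (1 + ‖s‖)) ^ c := by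
            refine mul_le_mul_of_nonneg_right (mul_le_mul_of_nonneg_right ?_ (by positivity))
              (le_of_lt hxc0)
            have h1 : (0:ℝ) ≤ E n * 2 ^ (n - 1) :=
              mul_nonneg (hE0 n) (pow_nonneg (by norm_num) _)
            linarith
end
end

section
/- Let Γ be a cofinite discrete subgroup of SL(2,ℝ), z₀, z₁ ∈ ℍ, and let I = [a, b] be an interval in ℝ/ℤ. Let D(R, θ): ℝ₊ × ℝ/ℤ → ℝ₊ satisfy e^{D(R,θ)} = k(θ) e^R + O(e^{βR}) for some β < 1, uniformly in θ, where k ∈ C¹(ℝ/ℤ) is positive. Then, assuming the effective angular equidistribution N_Γ^J(R, z₀, z₁) = (κ_Γ π/vol(Γ\ℍ)) |J| e^R + O(e^{αR}) holds for some α < 1 uniformly over intervals J ⊂ ℝ/ℤ, one has N_{Γ,D}^I(R, z₀, z₁) := #{γ ∈ Γ : d(z₀, γz₁) ≤ D(R, φ_{z₀,z₁}(γ)), φ_{z₀,z₁}(γ) ∈ I} = (κ_Γ π / vol(Γ\ℍ)) (∫_I k(θ) dθ) e^R + O(e^{δR}) for some δ < 1, as R → ∞. -/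
noncomputable section

open UpperHalfPlane Complex Real MeasureTheory Matrix Filter Topology Set
open scoped ENNReal NNReal

abbrev SL2R := Matrix.SpecialLinearGroup (Fin 2) ℝ

/-- `SL(2,ℝ)` carries the topology induced from the space of matrices. -/
instance : TopologicalSpace SL2R :=
  TopologicalSpace.induced (fun g : SL2R => (g : Matrix (Fin 2) (Fin 2) ℝ)) inferInstance

/-- The element `-I` of `SL(2,ℝ)`. -/
def negI : SL2R := ⟨-1, by rw [Matrix.det_neg]; simp⟩

/-- The rotation matrix `k(φ)`. -/
def rotMat (φ : ℝ) : SL2R :=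
  ⟨!![Real.cos φ, Real.sin φ; -Real.sin φ, Real.cos φ], by
    rw [Matrix.det_fin_two_of]; nlinarith [Real.sin_sq_add_cos_sq φ]⟩

/-- The matrix `γ₀ = [[1/√y₀, -x₀/√y₀],[0,√y₀]]` mapping `z₀` to `i`. -/
def scalingOf (z0 : ℍ) : SL2R :=
  ⟨!![1 / Real.sqrt z0.im, -z0.re / Real.sqrt z0.im; 0, Real.sqrt z0.im], by
    rw [Matrix.det_fin_two_of]
    have h : Real.sqrt z0.im ≠ 0 := ne_of_gt (Real.sqrt_pos.mpr z0.im_pos)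
    field_simp
    simp⟩

/-- The point `e^{-r} i` of the upper half plane. -/
def ptI (r : ℝ) : ℍ :=
  ⟨Real.exp (-r) * Complex.I, by
    rw [Complex.mul_I_im, Complex.ofReal_re]; exact Real.exp_pos (-r)⟩

/-- `φfun` is a geodesic polar angle coordinate: `φfun z ∈ [0,π)` and
`z = k(φfun z) • (e^{-r(z)} i)` where `r(z) = d(i,z)`. -/
def IsPolarAngle (φfun : ℍ → ℝ) : Prop :=
  ∀ z : ℍ, φfun z ∈ Set.Ico 0 Real.pi ∧
    z = rotMat (φfun z) • ptI (dist UpperHalfPlane.I z)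

/-- The normalized angle `φ_{z₀,w}(γ) = φ(γ₀ (γ w))/π`, i.e. `(2π)⁻¹` times the
angle at `z₀` between the vertical geodesic from `z₀` to `∞` and the geodesic from `z₀`
to `γ w`. -/
def normAngle (φfun : ℍ → ℝ) (z0 : ℍ) (γ : SL2R) (w : ℍ) : ℝ :=
  φfun (scalingOf z0 • (γ • w)) / Real.pi

/-- `x` lies in the interval `[a,b]` of `ℝ/ℤ`. -/
def InIntervalMod1 (x a b : ℝ) : Prop := ∃ m : ℤ, a ≤ x + m ∧ x + m ≤ b

instance : MeasurableSpace ℍ := borel ℍ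

/-- The hyperbolic measure `dμ = dx dy / y²` on the upper half plane. -/
def hypVolume : Measure ℍ :=
  Measure.comap (fun z : ℍ => (z : ℂ))
    ((volume : Measure ℂ).withDensity fun z => ENNReal.ofReal (1 / z.im ^ 2))

/-- `Γ` is cofinite with fundamental domain `F` of finite hyperbolic volume. -/
def IsCofiniteFundom (Γ : Subgroup SL2R) (F : Set ℍ) : Prop :=
  IsFundamentalDomain Γ F hypVolume ∧ hypVolume F < ⊤

open scoped Classical in
/-- `κ_Γ = 2` if `−I ∈ Γ` and `κ_Γ = 1` otherwise. -/
def kappa (Γ : Subgroup SL2R) : ℝ := if negI ∈ Γ then 2 else 1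

/-- `N_Γ^J(R,z₀,z₁)` for the interval `J = [c,d]` of `ℝ/ℤ`. -/
def angCount (Γ : Subgroup SL2R) (φfun : ℍ → ℝ) (z0 z1 : ℍ) (c d R : ℝ) : ℕ :=
  {γ : SL2R | γ ∈ Γ ∧ dist z0 (γ • z1) ≤ R ∧ InIntervalMod1 (normAngle φfun z0 γ z1) c d}.ncard

/-- `N_{Γ,D}^I(R,z₀,z₁) = #{γ ∈ Γ : d(z₀,γz₁) ≤ D(R, φ_{z₀,z₁}(γ)), φ_{z₀,z₁}(γ) ∈ I}`. -/
def angCountD (Γ : Subgroup SL2R) (φfun : ℍ → ℝ) (z0 z1 : ℍ) (D : ℝ → ℝ → ℝ)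
    (a b R : ℝ) : ℕ :=
  {γ : SL2R | γ ∈ Γ ∧ dist z0 (γ • z1) ≤ D R (normAngle φfun z0 γ z1) ∧
    InIntervalMod1 (normAngle φfun z0 γ z1) a b}.ncard

/-!
Cut `[a, b]` into `n ≈ e^{εR}` arcs of length at most `e^{-εR}`. On the arc starting at `tᵢ` the
profile `e^{D(R, θ)}` is within `E = O(e^{(1-ε)R} + e^{βR})` of `k(tᵢ) e^R`, because `k` is
Lipschitz and periodic. So the count is squeezed between sums of sector counts with radii
`log (k(tᵢ) e^R ± E)`, to which the equidistribution hypothesis applies; for the lower bound the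
arcs are shrunk slightly so that the sectors become disjoint. This gives
`A e^R ∑ᵢ |Iᵢ| k(tᵢ) + O(E + n e^{αR})`, and the Riemann sum is `∫_I k + O(e^{-εR})`. With
`ε = (1 - σ)/2`, `σ = max(α, β, 0)`, every error term is `O(e^{(1+σ)R/2})`. All counts are finite
because a discrete subgroup of `SL(2, ℝ)` acts properly discontinuously on `ℍ`.
-/

lemma exists_mem_Icc_succ_of_mem_Icc {t : ℕ → ℝ} {x : ℝ} :
    ∀ {n : ℕ}, 0 < n → x ∈ Icc (t 0) (t n) → ∃ i < n, x ∈ Icc (t i) (t (i + 1))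
  | 0, hn, _ => absurd hn (lt_irrefl 0)
  | n + 1, _, hx => by
    by_cases hxn : t n ≤ x
    · exact ⟨n, n.lt_add_one, hxn, hx.2⟩
    rcases Nat.eq_zero_or_pos n with rfl | hn
    · exact absurd hx.1 hxn
    obtain ⟨i, hi, hxi⟩ := exists_mem_Icc_succ_of_mem_Icc hn ⟨hx.1, (not_le.1 hxn).le⟩
    exact ⟨i, hi.trans n.lt_add_one, hxi⟩

lemma exists_uniform_partition {a b N : ℝ} (hab : a ≤ b) (hb : b ≤ a + 1) (hN : 1 ≤ N) :
    ∃ (n : ℕ) (t : ℕ → ℝ), 0 < n ∧ (n : ℝ) ≤ 2 * N ∧ Monotone t ∧ t 0 = a ∧ t n = b ∧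
      ∀ i, t (i + 1) - t i ≤ N⁻¹ := by
  set n := ⌈N⌉₊
  have hn : 0 < n := Nat.ceil_pos.2 (by linarith)
  have hNn : N ≤ n := Nat.le_ceil N
  have hh : 0 ≤ (b - a) / n := div_nonneg (by linarith) n.cast_nonneg
  refine ⟨n, fun i => a + i * ((b - a) / n), hn, ?_, fun i j hij => ?_, by simp, ?_, fun i => ?_⟩
  · linarith [Nat.ceil_lt_add_one (by linarith : 0 ≤ N)]
  · dsimp only
    gcongr
  · field_simp; ring
  · calc a + ((i + 1 : ℕ) : ℝ) * ((b - a) / n) - (a + i * ((b - a) / n)) = (b - a) / n := by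
          push_cast; ring
      _ ≤ 1 / n := by gcongr; linarith
      _ ≤ N⁻¹ := by rw [one_div]; exact inv_anti₀ (by linarith) hNn

lemma InIntervalMod1.not_inIntervalMod1 {x c d c' d' : ℝ} (hx : InIntervalMod1 x c d)
    (hdc' : d < c') (hd'c : d' < c + 1) : ¬ InIntervalMod1 x c' d' := by
  obtain ⟨m, hm₁, hm₂⟩ := hx
  rintro ⟨m', hm'₁, hm'₂⟩
  have h₁ : ((0 : ℤ) : ℝ) < (m' - m : ℤ) := by push_cast; linarith
  have h₂ : ((m' - m : ℤ) : ℝ) < (1 : ℤ) := by push_cast; linarith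
  norm_cast at h₁ h₂
  omega

lemma abs_riemannSum_sub_integral_le {f : ℝ → ℝ} {L : ℝ≥0} (hf : LipschitzWith L f)
    {t : ℕ → ℝ} (ht : Monotone t) {h : ℝ} (hh : ∀ i, t (i + 1) - t i ≤ h) (n : ℕ) :
    |∑ i ∈ Finset.range n, (t (i + 1) - t i) * f (t i) - ∫ x in t 0..t n, f x|
      ≤ L * h * (t n - t 0) := by
  have hpiece : ∀ i, |(t (i + 1) - t i) * f (t i) - ∫ x in t i..t (i + 1), f x|
      ≤ L * h * (t (i + 1) - t i) := by
    intro i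
    have hbound : ∀ x ∈ uIoc (t i) (t (i + 1)), ‖f (t i) - f x‖ ≤ L * h := by
      intro x hx
      rw [uIoc_of_le (ht i.le_succ)] at hx
      rw [Real.norm_eq_abs, ← Real.dist_eq, dist_comm]
      refine (hf.dist_le_mul x (t i)).trans ?_
      gcongr
      rw [Real.dist_eq, abs_le]
      constructor <;> linarith [hx.1, hx.2, hh i]
    have hpiece := intervalIntegral.norm_integral_le_of_norm_le_const hbound
    rwa [intervalIntegral.integral_sub intervalIntegrable_const
      (hf.continuous.intervalIntegrable _ _), intervalIntegral.integral_const, smul_eq_mul,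
      abs_of_nonneg (sub_nonneg.2 (ht i.le_succ))] at hpiece
  rw [← intervalIntegral.sum_integral_adjacent_intervals fun i _ =>
      hf.continuous.intervalIntegrable _ _, ← Finset.sum_sub_distrib, ← Finset.sum_range_sub,
    Finset.mul_sum]
  exact (Finset.abs_sum_le_sum_abs _ _).trans (Finset.sum_le_sum fun i _ => hpiece i)

lemma Function.Periodic.exists_forall_mem_Icc {k : ℝ → ℝ} (hper : Periodic k 1)
    (hk : Continuous k) (hpos : ∀ x, 0 < k x) : ∃ m M, 0 < m ∧ ∀ x, k x ∈ Icc m M := by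
  have hK := hper.compact_of_continuous one_ne_zero hk
  obtain ⟨_, ⟨y, rfl⟩, hy⟩ := hK.exists_isLeast (range_nonempty k)
  obtain ⟨_, ⟨z, rfl⟩, hz⟩ := hK.exists_isGreatest (range_nonempty k)
  exact ⟨k y, k z, hpos y, fun x => ⟨hy ⟨x, rfl⟩, hz ⟨x, rfl⟩⟩⟩

lemma Function.Periodic.exists_lipschitzWith {k : ℝ → ℝ} (hper : Periodic k 1)
    (hk : ContDiff ℝ 1 k) : ∃ L, LipschitzWith L k := by
  have hper' : Periodic (deriv k) 1 := fun x => by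
    rw [← deriv_comp_add_const]; exact congrArg (deriv · x) (funext hper)
  obtain ⟨B, hB⟩ := (hper'.compact_of_continuous one_ne_zero
    (hk.continuous_deriv le_rfl)).isBounded.exists_norm_le
  refine ⟨B.toNNReal, lipschitzWith_of_nnnorm_deriv_le (hk.differentiable one_ne_zero) fun x => ?_⟩
  rw [← NNReal.coe_le_coe, coe_nnnorm]
  exact (hB _ ⟨x, rfl⟩).trans (le_coe_toNNReal B)

lemma abs_sub_mul_le_of_periodic {k g : ℝ → ℝ} {L : ℝ≥0} (hL : LipschitzWith L k)
    (hper : Function.Periodic k 1) {Y B : ℝ} (hY : 0 ≤ Y) (hg : ∀ x, |g x - k x * Y| ≤ B)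
    {x t h : ℝ} {m : ℤ} (hx : |x + m - t| ≤ h) : |g x - k t * Y| ≤ L * h * Y + B := by
  have hkx : k (x + m) = k x := by simpa using (hper.int_mul m) x
  have hk : |k x - k t| ≤ L * h := by
    rw [← hkx, ← Real.dist_eq]
    exact (hL.dist_le_mul _ _).trans (by rw [Real.dist_eq]; gcongr)
  calc |g x - k t * Y| = |(g x - k x * Y) + (k x - k t) * Y| := by ring_nf
    _ ≤ |g x - k x * Y| + |k x - k t| * Y := by
      rw [← abs_of_nonneg hY, ← abs_mul, abs_of_nonneg hY]; exact abs_add_le _ _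
    _ ≤ L * h * Y + B := by linarith [hg x, mul_le_mul_of_nonneg_right hk hY]

lemma mul_exp_le_max_mul_exp {C β σ R : ℝ} (hβσ : β ≤ σ) (hR : 0 ≤ R) :
    C * Real.exp (β * R) ≤ max C 0 * Real.exp (σ * R) :=
  (mul_le_mul_of_nonneg_right (le_max_left C 0) (Real.exp_pos _).le).trans
    (mul_le_mul_of_nonneg_left (Real.exp_le_exp.2 (mul_le_mul_of_nonneg_right hβσ hR))
      (le_max_right C 0))

lemma exists_forall_abs_le_mul_exp_of_eventually {f : ℝ → ℝ} {δ C : ℝ} (hδ : 0 ≤ δ)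
    (hev : ∀ᶠ R in atTop, |f R| ≤ C * Real.exp (δ * R))
    (hbdd : ∀ R₀, ∃ B, ∀ R ∈ Icc 1 R₀, |f R| ≤ B) :
    ∃ C', ∀ R, 1 ≤ R → |f R| ≤ C' * Real.exp (δ * R) := by
  obtain ⟨R₀, hR₀⟩ := eventually_atTop.1 hev
  obtain ⟨B, hB⟩ := hbdd R₀
  refine ⟨max C 0 + max B 0, fun R hR => ?_⟩
  have h₁ : 1 ≤ Real.exp (δ * R) := Real.one_le_exp (by nlinarith)
  have h₂ := Real.exp_pos (δ * R)
  rcases le_total R₀ R with h | h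
  · nlinarith [hR₀ R h, le_max_left C 0, le_max_right B 0]
  · nlinarith [hB R ⟨hR, h⟩, le_max_left B 0, le_max_right C 0,
      mul_le_mul_of_nonneg_left h₁ (le_max_right B 0)]

section Sectors

variable {X : Type*}

/-- With `r γ = d(z₀, γ z₁)` and `θ γ = φ_{z₀,z₁}(γ)`, `angCount` is the cardinality of
`sectorSet Γ r θ (fun _ => R) c d` and `angCountD` that of `sectorSet Γ r θ (D R) a b`. -/
def sectorSet (S : Set X) (r θ : X → ℝ) (ρ : ℝ → ℝ) (c d : ℝ) : Set X :=
  {x | x ∈ S ∧ r x ≤ ρ (θ x) ∧ InIntervalMod1 (θ x) c d}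

def HasEquidistributedSectors (S : Set X) (r θ : X → ℝ) (A σ C : ℝ) : Prop :=
  ∀ c d, c ≤ d → d ≤ c + 1 → ∀ R, 0 < R →
    |((sectorSet S r θ (fun _ => R) c d).ncard : ℝ) - A * (d - c) * Real.exp R|
      ≤ C * Real.exp (σ * R)

variable {S : Set X} {r θ : X → ℝ}

lemma sectorSet_subset_biUnion {ρ : ℝ → ℝ} {t : ℕ → ℝ} {n : ℕ} (hn : 0 < n) {R : ℕ → ℝ}
    (hρ : ∀ i < n, ∀ (y : ℝ) (m : ℤ), y + m ∈ Icc (t i) (t (i + 1)) → ρ y ≤ R i) :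
    sectorSet S r θ ρ (t 0) (t n)
      ⊆ ⋃ i ∈ Finset.range n, sectorSet S r θ (fun _ => R i) (t i) (t (i + 1)) := by
  rintro x ⟨hxS, hxr, m, hm⟩
  obtain ⟨i, hi, hmi⟩ := exists_mem_Icc_succ_of_mem_Icc hn hm
  exact mem_biUnion (Finset.mem_range.2 hi) ⟨hxS, hxr.trans (hρ i hi _ m hmi), m, hmi⟩

lemma sum_ncard_sectorSet_le_ncard {ρ : ℝ → ℝ} {t : ℕ → ℝ} (ht : Monotone t) {n : ℕ}
    (hlen : t n ≤ t 0 + 1) (hfin : (sectorSet S r θ ρ (t 0) (t n)).Finite) {η : ℝ} (hη : 0 < η)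
    {R : ℕ → ℝ} (hρ : ∀ i < n, ∀ (y : ℝ) (m : ℤ), y + m ∈ Icc (t i) (t (i + 1)) → R i ≤ ρ y) :
    ∑ i ∈ Finset.range n, (sectorSet S r θ (fun _ => R i) (t i + η) (t (i + 1) - η)).ncard
      ≤ (sectorSet S r θ ρ (t 0) (t n)).ncard := by
  set piece := fun i => sectorSet S r θ (fun _ => R i) (t i + η) (t (i + 1) - η)
  have hsub : ∀ i ∈ Finset.range n, piece i ⊆ sectorSet S r θ ρ (t 0) (t n) := by
    rintro i hi x ⟨hxS, hxr, m, hm₁, hm₂⟩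
    have hi := Finset.mem_range.1 hi
    have h₀ := ht (Nat.zero_le i)
    have h₁ := ht (Nat.succ_le_of_lt hi)
    exact ⟨hxS, hxr.trans (hρ i hi _ m ⟨by linarith, by linarith⟩), m, by linarith, by linarith⟩
  have hdisj : (Finset.range n : Set ℕ).PairwiseDisjoint piece := by
    have key : ∀ i j, i < j → j < n → Disjoint (piece i) (piece j) := by
      refine fun i j hij hj => disjoint_left.2 fun x hxi hxj =>
        hxi.2.2.not_inIntervalMod1 ?_ ?_ hxj.2.2
      · linarith [ht (Nat.succ_le_of_lt hij)]
      · linarith [ht (Nat.zero_le i), ht (Nat.succ_le_of_lt hj)]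
    intro i hi j hj hij
    rcases hij.lt_or_gt with h | h
    · exact key i j h (Finset.mem_range.1 hj)
    · exact (key j i h (Finset.mem_range.1 hi)).symm
  rw [← finsum_mem_coe_finset, ← (Finset.finite_toSet _).ncard_biUnion
    (fun i hi => hfin.subset (hsub i hi)) hdisj]
  exact ncard_le_ncard (iUnion₂_subset hsub) hfin

lemma abs_ncard_sectorSet_sub_le_ncard_add (hfin : ∀ R, {x | x ∈ S ∧ r x ≤ R}.Finite)
    {ρ : ℝ → ℝ} {T : ℝ} (hρ : ∀ y, ρ y ≤ T) (c d Z : ℝ) :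
    |((sectorSet S r θ ρ c d).ncard : ℝ) - Z| ≤ {x | x ∈ S ∧ r x ≤ T}.ncard + |Z| := by
  have : ((sectorSet S r θ ρ c d).ncard : ℝ) ≤ {x | x ∈ S ∧ r x ≤ T}.ncard := by
    exact_mod_cast ncard_le_ncard (s := sectorSet S r θ ρ c d) (t := {x | x ∈ S ∧ r x ≤ T})
      (fun x hx => ⟨hx.1, hx.2.1.trans (hρ _)⟩) (hfin T)
  refine (abs_sub _ _).trans ?_
  rw [Nat.abs_cast]
  linarith

namespace HasEquidistributedSectors

variable {A σ C : ℝ}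

lemma abs_ncard_sectorSet_log_sub_le (hS : HasEquidistributedSectors S r θ A σ C)
    (hσ : 0 ≤ σ) (hC : 0 ≤ C) {c d Y T : ℝ} (hcd : c ≤ d) (hdc : d ≤ c + 1) (hY : 1 < Y)
    (hYT : Y ≤ Real.exp T) :
    |((sectorSet S r θ (fun _ => Real.log Y) c d).ncard : ℝ) - A * (d - c) * Y|
      ≤ C * Real.exp (σ * T) := by
  have h := hS c d hcd hdc (Real.log Y) (Real.log_pos hY)
  rw [Real.exp_log (by linarith)] at h
  refine h.trans (mul_le_mul_of_nonneg_left (Real.exp_le_exp.2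
    (mul_le_mul_of_nonneg_left ?_ hσ)) hC)
  exact (Real.log_le_iff_le_exp (by linarith)).2 hYT

lemma ncard_sectorSet_le_sum (hS : HasEquidistributedSectors S r θ A σ C)
    (hfin : ∀ R, {x | x ∈ S ∧ r x ≤ R}.Finite) (hσ : 0 ≤ σ) (hC : 0 ≤ C) {ρ : ℝ → ℝ}
    {t : ℕ → ℝ} {n : ℕ} (hn : 0 < n) (ht : Monotone t) (hlen : t n ≤ t 0 + 1) {v : ℕ → ℝ}
    {T : ℝ}
    (hρ : ∀ i < n, ∀ (y : ℝ) (m : ℤ), y + m ∈ Icc (t i) (t (i + 1)) → Real.exp (ρ y) ≤ v i)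
    (hv : ∀ i < n, 1 < v i ∧ v i ≤ Real.exp T) :
    ((sectorSet S r θ ρ (t 0) (t n)).ncard : ℝ)
      ≤ ∑ i ∈ Finset.range n, (A * (t (i + 1) - t i) * v i + C * Real.exp (σ * T)) := by
  set piece := fun i => sectorSet S r θ (fun _ => Real.log (v i)) (t i) (t (i + 1))
  have hcover : sectorSet S r θ ρ (t 0) (t n) ⊆ ⋃ i ∈ Finset.range n, piece i :=
    sectorSet_subset_biUnion hn fun i hi y m hm =>
      (Real.le_log_iff_exp_le (by linarith [hv i hi])).2 (hρ i hi y m hm)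
  have hfin' : (⋃ i ∈ Finset.range n, piece i).Finite :=
    (Finset.finite_toSet _).biUnion fun i _ => (hfin _).subset fun x hx => ⟨hx.1, hx.2.1⟩
  have hpiece : ∀ i ∈ Finset.range n,
      ((piece i).ncard : ℝ) ≤ A * (t (i + 1) - t i) * v i + C * Real.exp (σ * T) := by
    intro i hi
    have hi := Finset.mem_range.1 hi
    have := (abs_le.1 (hS.abs_ncard_sectorSet_log_sub_le hσ hC (ht i.le_succ)
      (by linarith [ht (Nat.zero_le i), ht (Nat.succ_le_of_lt hi)]) (hv i hi).1 (hv i hi).2)).2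
    linarith
  calc ((sectorSet S r θ ρ (t 0) (t n)).ncard : ℝ)
      ≤ ∑ i ∈ Finset.range n, ((piece i).ncard : ℝ) := by
        exact_mod_cast (ncard_le_ncard hcover hfin').trans (Finset.set_ncard_biUnion_le _ _)
    _ ≤ _ := Finset.sum_le_sum hpiece

lemma sum_le_ncard_sectorSet (hS : HasEquidistributedSectors S r θ A σ C) (hA : 0 ≤ A)
    (hσ : 0 ≤ σ) (hC : 0 ≤ C) {ρ : ℝ → ℝ} {t : ℕ → ℝ} {n : ℕ} (ht : Monotone t)
    (hlen : t n ≤ t 0 + 1) (hfin : (sectorSet S r θ ρ (t 0) (t n)).Finite) {w : ℕ → ℝ} {T : ℝ}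
    (hρ : ∀ i < n, ∀ (y : ℝ) (m : ℤ), y + m ∈ Icc (t i) (t (i + 1)) → w i ≤ Real.exp (ρ y))
    (hw : ∀ i < n, 1 < w i ∧ w i ≤ Real.exp T) :
    ∑ i ∈ Finset.range n, (A * (t (i + 1) - t i) * w i - C * Real.exp (σ * T))
      ≤ (sectorSet S r θ ρ (t 0) (t n)).ncard := by
  set K := 2 * n * A * Real.exp T
  -- Shrinking the arcs by `η` makes the sectors disjoint, at a cost `η K` that vanishes as `η → 0`.
  have hshrink : ∀ η > 0, ∑ i ∈ Finset.range n,
      (A * (t (i + 1) - t i) * w i - C * Real.exp (σ * T)) - η * K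
        ≤ (sectorSet S r θ ρ (t 0) (t n)).ncard := by
    intro η hη
    set piece := fun i => sectorSet S r θ (fun _ => Real.log (w i)) (t i + η) (t (i + 1) - η)
    have hpiece : ∀ i ∈ Finset.range n,
        A * (t (i + 1) - t i) * w i - 2 * η * A * Real.exp T - C * Real.exp (σ * T)
          ≤ (piece i).ncard := by
      intro i hi
      have hi := Finset.mem_range.1 hi
      have hwT : A * (2 * η) * w i ≤ A * (2 * η) * Real.exp T :=
        mul_le_mul_of_nonneg_left (hw i hi).2 (by positivity)
      by_cases hcd : t i + η ≤ t (i + 1) - η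
      · have := (abs_le.1 (hS.abs_ncard_sectorSet_log_sub_le hσ hC hcd
          (by linarith [ht (Nat.zero_le i), ht (Nat.succ_le_of_lt hi)]) (hw i hi).1
          (hw i hi).2)).1
        linarith
      · have : A * (t (i + 1) - t i) * w i ≤ A * (2 * η) * w i :=
          mul_le_mul_of_nonneg_right (mul_le_mul_of_nonneg_left (by linarith) hA)
            (by linarith [(hw i hi).1])
        have := mul_nonneg hC (Real.exp_pos (σ * T)).le
        have : (0 : ℝ) ≤ (piece i).ncard := Nat.cast_nonneg _
        linarith
    have hρ' : ∀ i < n, ∀ (y : ℝ) (m : ℤ), y + m ∈ Icc (t i) (t (i + 1)) →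
        Real.log (w i) ≤ ρ y := fun i hi y m hm =>
      (Real.log_le_iff_le_exp (by linarith [hw i hi])).2 (hρ i hi y m hm)
    calc ∑ i ∈ Finset.range n, (A * (t (i + 1) - t i) * w i - C * Real.exp (σ * T)) - η * K
        = ∑ i ∈ Finset.range n,
            (A * (t (i + 1) - t i) * w i - 2 * η * A * Real.exp T - C * Real.exp (σ * T)) := by
          simp only [Finset.sum_sub_distrib, Finset.sum_const, Finset.card_range, nsmul_eq_mul, K]
          ring
      _ ≤ ∑ i ∈ Finset.range n, ((piece i).ncard : ℝ) := Finset.sum_le_sum hpiece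
      _ ≤ _ := by exact_mod_cast sum_ncard_sectorSet_le_ncard ht hlen hfin hη hρ'
  refine le_of_forall_pos_le_add fun ε hε => ?_
  have hK : 0 ≤ K := by positivity
  have := hshrink (ε / (K + 1)) (by positivity)
  have : ε / (K + 1) * K ≤ ε := by
    rw [div_mul_eq_mul_div, div_le_iff₀ (by positivity)]
    nlinarith
  linarith

lemma abs_ncard_sectorSet_sub_le (hS : HasEquidistributedSectors S r θ A σ C)
    (hfin : ∀ R, {x | x ∈ S ∧ r x ≤ R}.Finite) (hA : 0 ≤ A) (hσ : 0 ≤ σ) (hC : 0 ≤ C)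
    {ρ : ℝ → ℝ} {t : ℕ → ℝ} {n : ℕ} (hn : 0 < n) (ht : Monotone t) (hlen : t n ≤ t 0 + 1)
    {u : ℕ → ℝ} {E T : ℝ}
    (hρ : ∀ i < n, ∀ (y : ℝ) (m : ℤ), y + m ∈ Icc (t i) (t (i + 1)) →
      |Real.exp (ρ y) - u i| ≤ E)
    (hu : ∀ i < n, 1 < u i - E ∧ u i + E ≤ Real.exp T) :
    |((sectorSet S r θ ρ (t 0) (t n)).ncard : ℝ)
        - A * ∑ i ∈ Finset.range n, (t (i + 1) - t i) * u i|
      ≤ A * E * (t n - t 0) + n * (C * Real.exp (σ * T)) := by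
  have hE : 0 ≤ E := (abs_nonneg _).trans (hρ 0 hn (t 0) 0 (by simpa using ht (Nat.zero_le 1)))
  have hfinρ : (sectorSet S r θ ρ (t 0) (t n)).Finite :=
    (hfin T).subset fun x ⟨hxS, hxr, m, hm⟩ => by
      obtain ⟨i, hi, hmi⟩ := exists_mem_Icc_succ_of_mem_Icc hn hm
      refine ⟨hxS, hxr.trans (Real.exp_le_exp.1 ?_)⟩
      linarith [(abs_le.1 (hρ i hi _ m hmi)).2, (hu i hi).2]
  have hsum : ∀ e : ℝ, ∑ i ∈ Finset.range n, A * (t (i + 1) - t i) * (u i + e)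
      = A * ∑ i ∈ Finset.range n, (t (i + 1) - t i) * u i + A * e * (t n - t 0) := by
    intro e
    rw [← Finset.sum_range_sub t n, Finset.mul_sum, Finset.mul_sum, ← Finset.sum_add_distrib]
    exact Finset.sum_congr rfl fun i _ => by ring
  have hup := hS.ncard_sectorSet_le_sum hfin hσ hC hn ht hlen (v := fun i => u i + E)
    (fun i hi y m hm => by linarith [(abs_le.1 (hρ i hi y m hm)).2])
    (fun i hi => ⟨by linarith [(hu i hi).1], (hu i hi).2⟩)
  have hlow := hS.sum_le_ncard_sectorSet hA hσ hC ht hlen hfinρ (w := fun i => u i + -E)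
    (fun i hi y m hm => by linarith [(abs_le.1 (hρ i hi y m hm)).1])
    (fun i hi => ⟨by linarith [(hu i hi).1], by linarith [(hu i hi).2]⟩)
  rw [Finset.sum_add_distrib, hsum, Finset.sum_const, Finset.card_range, nsmul_eq_mul] at hup
  rw [Finset.sum_sub_distrib, hsum, Finset.sum_const, Finset.card_range, nsmul_eq_mul] at hlow
  rw [abs_le]
  constructor <;> linarith

lemma abs_ncard_sectorSet_sub_integral_le_of_partition
    (hS : HasEquidistributedSectors S r θ A σ C) (hfin : ∀ R, {x | x ∈ S ∧ r x ≤ R}.Finite)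
    (hA : 0 ≤ A) (hσ : 0 ≤ σ) (hC : 0 ≤ C) {k : ℝ → ℝ} {L : ℝ≥0} (hL : LipschitzWith L k)
    (hper : Function.Periodic k 1) {m M : ℝ} (hkmM : ∀ x, k x ∈ Icc m M) {ρ : ℝ → ℝ}
    {R CD : ℝ} (hρ : ∀ x, |Real.exp (ρ x) - k x * Real.exp R| ≤ CD * Real.exp (σ * R))
    {t : ℕ → ℝ} {n : ℕ} {h T : ℝ} (hn : 0 < n) (ht : Monotone t) (hlen : t n ≤ t 0 + 1)
    (hstep : ∀ i, t (i + 1) - t i ≤ h)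
    (hlow : 1 < m * Real.exp R - (L * h * Real.exp R + CD * Real.exp (σ * R)))
    (hup : M * Real.exp R + (L * h * Real.exp R + CD * Real.exp (σ * R)) ≤ Real.exp T) :
    |((sectorSet S r θ ρ (t 0) (t n)).ncard : ℝ) - A * (∫ x in t 0..t n, k x) * Real.exp R|
      ≤ A * (L * h * Real.exp R + CD * Real.exp (σ * R)) * (t n - t 0)
        + n * (C * Real.exp (σ * T)) + A * Real.exp R * (L * h * (t n - t 0)) := by
  have hR := Real.exp_pos R
  have hcount := hS.abs_ncard_sectorSet_sub_le hfin hA hσ hC hn ht hlen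
    (u := fun i => k (t i) * Real.exp R) (E := L * h * Real.exp R + CD * Real.exp (σ * R))
    (fun i _ y m hm => abs_sub_mul_le_of_periodic (x := y) (m := m) hL hper hR.le hρ
      (by rw [abs_le]; constructor <;> linarith [hm.1, hm.2, hstep i]))
    (fun i _ => ⟨by nlinarith [(hkmM (t i)).1], by nlinarith [(hkmM (t i)).2]⟩)
  have hriem := abs_riemannSum_sub_integral_le hL ht hstep n
  simp only [← mul_assoc, ← Finset.sum_mul] at hcount
  set sumk := ∑ i ∈ Finset.range n, (t (i + 1) - t i) * k (t i)
  have hAe : 0 ≤ A * Real.exp R := by positivity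
  calc |((sectorSet S r θ ρ (t 0) (t n)).ncard : ℝ) - A * (∫ x in t 0..t n, k x) * Real.exp R|
      = |(((sectorSet S r θ ρ (t 0) (t n)).ncard : ℝ) - A * sumk * Real.exp R)
          + A * Real.exp R * (sumk - ∫ x in t 0..t n, k x)| := by ring_nf
    _ ≤ |((sectorSet S r θ ρ (t 0) (t n)).ncard : ℝ) - A * sumk * Real.exp R|
          + A * Real.exp R * |sumk - ∫ x in t 0..t n, k x| := by
      rw [← abs_of_nonneg hAe, ← abs_mul, abs_of_nonneg hAe]; exact abs_add_le _ _
    _ ≤ _ := by linarith [mul_le_mul_of_nonneg_left hriem hAe]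

lemma abs_ncard_sectorSet_sub_integral_le (hS : HasEquidistributedSectors S r θ A σ C)
    (hfin : ∀ R, {x | x ∈ S ∧ r x ≤ R}.Finite) (hA : 0 ≤ A) (hσ : 0 ≤ σ) (hC : 0 ≤ C)
    {ε δ : ℝ} (hε : 0 ≤ ε) (hεδ : ε + δ = 1) (hσδ : σ + ε ≤ δ) {k : ℝ → ℝ} {L : ℝ≥0}
    (hL : LipschitzWith L k) (hper : Function.Periodic k 1) {m M c₀ CD : ℝ}
    (hkmM : ∀ x, k x ∈ Icc m M) (hc₀ : M + L + CD ≤ Real.exp c₀) (hCD : 0 ≤ CD) {ρ : ℝ → ℝ}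
    {R : ℝ} (hR : 0 < R) (hρ : ∀ x, |Real.exp (ρ x) - k x * Real.exp R| ≤ CD * Real.exp (σ * R))
    (hlarge : L + CD + 2 ≤ m * Real.exp (ε * R)) {a b : ℝ} (hab : a ≤ b) (hb : b ≤ a + 1) :
    |((sectorSet S r θ ρ a b).ncard : ℝ) - A * (∫ x in a..b, k x) * Real.exp R|
      ≤ (A * (2 * L + CD) + 2 * C * Real.exp (σ * c₀)) * Real.exp (δ * R) := by
  have hexpR : Real.exp (ε * R) * Real.exp (δ * R) = Real.exp R := by
    rw [← Real.exp_add, ← add_mul, hεδ, one_mul]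
  have hexpσ : Real.exp (ε * R) * Real.exp (σ * R) ≤ Real.exp (δ * R) := by
    rw [← Real.exp_add]; exact Real.exp_le_exp.2 (by nlinarith)
  have hσδR : Real.exp (σ * R) ≤ Real.exp (δ * R) := Real.exp_le_exp.2 (by nlinarith)
  have hδR : Real.exp (δ * R) ≤ Real.exp R := Real.exp_le_exp.2 (by nlinarith)
  have hδ0 : 1 ≤ Real.exp (δ * R) := Real.one_le_exp (by nlinarith)
  obtain ⟨n, t, hn, hn2, ht, rfl, rfl, hstep⟩ :=
    exists_uniform_partition hab hb (Real.one_le_exp (by positivity) : 1 ≤ Real.exp (ε * R))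
  have hh : L * (Real.exp (ε * R))⁻¹ * Real.exp R = L * Real.exp (δ * R) := by
    rw [← hexpR]; field_simp
  have hE : L * (Real.exp (ε * R))⁻¹ * Real.exp R + CD * Real.exp (σ * R)
      ≤ (L + CD) * Real.exp (δ * R) := by
    rw [hh]; nlinarith
  have hmR : (L + CD + 2) * Real.exp (δ * R) ≤ m * Real.exp R := by
    rw [← hexpR, ← mul_assoc]; exact mul_le_mul_of_nonneg_right hlarge (Real.exp_pos _).le
  have key := abs_ncard_sectorSet_sub_integral_le_of_partition hS hfin hA hσ hC hL hper hkmM hρ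
    hn ht hb hstep (T := c₀ + R) (by nlinarith)
    (by rw [Real.exp_add]; nlinarith [L.coe_nonneg])
  have h₁ : n * (C * Real.exp (σ * (c₀ + R)))
      ≤ 2 * C * Real.exp (σ * c₀) * Real.exp (δ * R) := by
    rw [mul_add, Real.exp_add]
    nlinarith [mul_le_mul_of_nonneg_right hn2
      (by positivity : 0 ≤ C * Real.exp (σ * c₀) * Real.exp (σ * R)),
      mul_le_mul_of_nonneg_left hexpσ (by positivity : 0 ≤ 2 * C * Real.exp (σ * c₀))]
  have h₂ : A * Real.exp R * (L * (Real.exp (ε * R))⁻¹ * (t n - t 0))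
      ≤ A * L * Real.exp (δ * R) := by
    rw [show A * Real.exp R * (L * (Real.exp (ε * R))⁻¹ * (t n - t 0))
      = A * (L * (Real.exp (ε * R))⁻¹ * Real.exp R) * (t n - t 0) by ring, hh, ← mul_assoc]
    exact mul_le_of_le_one_right (by positivity) (by linarith)
  have h₃ : A * (L * (Real.exp (ε * R))⁻¹ * Real.exp R + CD * Real.exp (σ * R)) * (t n - t 0)
      ≤ A * (L + CD) * Real.exp (δ * R) := by
    have := mul_le_mul_of_nonneg_left
      ((mul_le_of_le_one_right (b := t n - t 0) (by positivity) (by linarith)).trans hE) hA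
    linarith
  linarith

end HasEquidistributedSectors

theorem HasEquidistributedSectors.exists_abs_ncard_sectorSet_sub_integral_le {A σ C : ℝ}
    (hS : HasEquidistributedSectors S r θ A σ C) (hfin : ∀ R, {x | x ∈ S ∧ r x ≤ R}.Finite)
    (hA : 0 ≤ A) (hσ0 : 0 ≤ σ) (hσ1 : σ < 1) (hC : 0 ≤ C) {k : ℝ → ℝ} (hk : ContDiff ℝ 1 k)
    (hper : Function.Periodic k 1) (hpos : ∀ x, 0 < k x) {D : ℝ → ℝ → ℝ} {CD : ℝ}
    (hCD : 0 ≤ CD)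
    (hD : ∀ R, 0 < R → ∀ x, |Real.exp (D R x) - k x * Real.exp R| ≤ CD * Real.exp (σ * R))
    {a b : ℝ} (hab : a ≤ b) (hb : b ≤ a + 1) :
    ∃ δ C', δ < 1 ∧ ∀ R, 1 ≤ R →
      |((sectorSet S r θ (D R) a b).ncard : ℝ) - A * (∫ x in a..b, k x) * Real.exp R|
        ≤ C' * Real.exp (δ * R) := by
  obtain ⟨m, M, hm, hkmM⟩ := hper.exists_forall_mem_Icc hk.continuous hpos
  obtain ⟨L, hL⟩ := hper.exists_lipschitzWith hk
  set c₀ := M + L + CD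
  have hc₀ : M + L + CD ≤ Real.exp c₀ := by linarith [Real.add_one_le_exp c₀]
  have hDle : ∀ R, 0 < R → ∀ x, D R x ≤ c₀ + R := by
    intro R hR x
    rw [← Real.exp_le_exp, Real.exp_add]
    have h₁ := mul_le_mul_of_nonneg_right (hkmM x).2 (Real.exp_pos R).le
    have h₂ : CD * Real.exp (σ * R) ≤ CD * Real.exp R :=
      mul_le_mul_of_nonneg_left (Real.exp_le_exp.2 (by nlinarith)) hCD
    have h₃ := mul_le_mul_of_nonneg_right hc₀ (Real.exp_pos R).le
    nlinarith [(abs_le.1 (hD R hR x)).2, L.coe_nonneg, Real.exp_pos R]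
  set f := fun R => ((sectorSet S r θ (D R) a b).ncard : ℝ) - A * (∫ x in a..b, k x) * Real.exp R
  have hev : ∀ᶠ R in atTop, |f R|
      ≤ (A * (2 * L + CD) + 2 * C * Real.exp (σ * c₀)) * Real.exp ((1 + σ) / 2 * R) := by
    have hlim : Tendsto (fun R => m * Real.exp ((1 - σ) / 2 * R)) atTop atTop :=
      (Real.tendsto_exp_atTop.comp (tendsto_id.const_mul_atTop (by linarith))).const_mul_atTop hm
    filter_upwards [eventually_gt_atTop 0, hlim.eventually_ge_atTop (L + CD + 2)] with R hR hlarge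
    exact hS.abs_ncard_sectorSet_sub_integral_le hfin hA hσ0 hC (by linarith) (by ring)
      (by linarith) hL hper hkmM hc₀ hCD hR (hD R hR) hlarge hab hb
  have hbdd : ∀ R₀, ∃ B, ∀ R ∈ Icc 1 R₀, |f R| ≤ B := by
    intro R₀
    refine ⟨{x | x ∈ S ∧ r x ≤ c₀ + R₀}.ncard + |A * ∫ x in a..b, k x| * Real.exp R₀,
      fun R hR => (abs_ncard_sectorSet_sub_le_ncard_add hfin (T := c₀ + R₀)
        (fun y => (hDle R (by linarith [hR.1]) y).trans (by linarith [hR.2])) a b _).trans ?_⟩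
    rw [abs_mul _ (Real.exp R), abs_of_pos (Real.exp_pos R)]
    gcongr
    exact hR.2
  obtain ⟨C', hC'⟩ := exists_forall_abs_le_mul_exp_of_eventually (by positivity) hev hbdd
  exact ⟨_, C', by linarith, hC'⟩

end Sectors

lemma finite_setOf_mem_dist_smul_le (Γ : Subgroup SL2R) (hdisc : DiscreteTopology Γ)
    (z0 z1 : ℍ) (R : ℝ) : {γ : SL2R | γ ∈ Γ ∧ dist z0 (γ • z1) ≤ R}.Finite := by
  have := @UpperHalfPlane.instProperlyDiscontinuousSL2RSubgroup Γ hdisc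
  refine ((ProperlyDiscontinuousSMul.finite_disjoint_inter_image (Γ := Γ)
    (isCompact_singleton (x := z1)) (isCompact_closedBall z0 R)).image Subtype.val).subset ?_
  rintro γ ⟨hγ, hdist⟩
  exact ⟨⟨γ, hγ⟩, ⟨γ • z1, ⟨z1, rfl, rfl⟩, by rwa [Metric.mem_closedBall, dist_comm]⟩, rfl⟩

theorem riemann_sum_lemma_general (Γ : Subgroup SL2R) (hdisc : DiscreteTopology Γ)
    (F : Set ℍ)
    (φfun : ℍ → ℝ) (z0 z1 : ℍ)
    (a b : ℝ) (hab : a ≤ b) (hb : b ≤ a + 1)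
    (D : ℝ → ℝ → ℝ)
    (k : ℝ → ℝ) (hk : ContDiff ℝ 1 k) (hkper : Function.Periodic k 1)
    (hkpos : ∀ θ : ℝ, 0 < k θ)
    (β : ℝ) (hβ : β < 1)
    (hD : ∃ C : ℝ, ∀ R : ℝ, 0 < R → ∀ θ : ℝ,
      |Real.exp (D R θ) - k θ * Real.exp R| ≤ C * Real.exp (β * R))
    (α : ℝ) (hα : α < 1)
    (hequi : ∃ C : ℝ, ∀ c d : ℝ, c ≤ d → d ≤ c + 1 → ∀ R : ℝ, 0 < R →
      |(angCount Γ φfun z0 z1 c d R : ℝ) -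
          kappa Γ * Real.pi / (hypVolume F).toReal * (d - c) * Real.exp R|
        ≤ C * Real.exp (α * R)) :
    ∃ δ C : ℝ, δ < 1 ∧ ∀ R : ℝ, 1 ≤ R →
      |(angCountD Γ φfun z0 z1 D a b R : ℝ) -
          kappa Γ * Real.pi / (hypVolume F).toReal * (∫ θ in a..b, k θ) * Real.exp R|
        ≤ C * Real.exp (δ * R) := by
  obtain ⟨CD, hD⟩ := hD
  obtain ⟨CE, hequi⟩ := hequi
  have hA : 0 ≤ kappa Γ * Real.pi / (hypVolume F).toReal := by
    unfold kappa; split_ifs <;> positivity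
  have hασ : α ≤ max (max α β) 0 := (le_max_left α β).trans (le_max_left _ _)
  have hβσ : β ≤ max (max α β) 0 := (le_max_right α β).trans (le_max_left _ _)
  exact HasEquidistributedSectors.exists_abs_ncard_sectorSet_sub_integral_le
    (A := kappa Γ * Real.pi / (hypVolume F).toReal) (k := k) (D := D) (S := Γ)
    (r := fun γ => dist z0 (γ • z1)) (θ := fun γ => normAngle φfun z0 γ z1)
    (fun c d hcd hdc R hR => (hequi c d hcd hdc R hR).trans (mul_exp_le_max_mul_exp hασ hR.le))
    (finite_setOf_mem_dist_smul_le Γ hdisc z0 z1) hA (le_max_right _ _)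
    (max_lt (max_lt hα hβ) one_pos) (le_max_right _ _) hk hkper hkpos (le_max_right CD 0)
    (fun R hR x => (hD R hR x).trans (mul_exp_le_max_mul_exp hβσ hR.le)) hab hb

/-- (Riemann sum lemma.)  If `e^{D(R,θ)} = k(θ)e^R + O(e^{βR})`
uniformly in `θ` with `β < 1` and `k ∈ C¹(ℝ/ℤ)` positive, then — assuming the effective
angular equidistribution `N_Γ^J(R,z₀,z₁) = (κ_Γ π/vol(Γ\ℍ))|J| e^R + O(e^{αR})` uniformly
over intervals `J ⊂ ℝ/ℤ` for some `α < 1` — one has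
`N_{Γ,D}^I(R,z₀,z₁) = (κ_Γ π/vol(Γ\ℍ)) (∫_I k(θ)dθ) e^R + O(e^{δR})` for some `δ < 1`. -/
theorem riemann_sum_lemma (Γ : Subgroup SL2R) (hdisc : DiscreteTopology Γ)
    (F : Set ℍ) (hcofin : IsCofiniteFundom Γ F)
    (φfun : ℍ → ℝ) (hφ : IsPolarAngle φfun) (z0 z1 : ℍ)
    (a b : ℝ) (hab : a ≤ b) (hb : b ≤ a + 1)
    (D : ℝ → ℝ → ℝ) (hDpos : ∀ R θ : ℝ, 0 < R → 0 < D R θ)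
    (k : ℝ → ℝ) (hk : ContDiff ℝ 1 k) (hkper : Function.Periodic k 1)
    (hkpos : ∀ θ : ℝ, 0 < k θ)
    (β : ℝ) (hβ : β < 1)
    (hD : ∃ C : ℝ, ∀ R : ℝ, 0 < R → ∀ θ : ℝ,
      |Real.exp (D R θ) - k θ * Real.exp R| ≤ C * Real.exp (β * R))
    (α : ℝ) (hα : α < 1)
    (hequi : ∃ C : ℝ, ∀ c d : ℝ, c ≤ d → d ≤ c + 1 → ∀ R : ℝ, 0 < R →
      |(angCount Γ φfun z0 z1 c d R : ℝ) -
          kappa Γ * Real.pi / (hypVolume F).toReal * (d - c) * Real.exp R|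
        ≤ C * Real.exp (α * R)) :
    ∃ δ C : ℝ, δ < 1 ∧ ∀ R : ℝ, 1 ≤ R →
      |(angCountD Γ φfun z0 z1 D a b R : ℝ) -
          kappa Γ * Real.pi / (hypVolume F).toReal * (∫ θ in a..b, k θ) * Real.exp R|
        ≤ C * Real.exp (δ * R) :=
  riemann_sum_lemma_general Γ hdisc F φfun z0 z1 a b hab hb D k hk hkper hkpos β hβ hD α hα hequi
end
end

section
/- Fix z₁ = x₁ + iy₁ ∈ ℍ and t ∈ (−π, π) \ {0}. For R > 0 let w' = x' + iy' be the intersection point (with negative real part when t > 0) of the geodesic through i making angle t with the vertical geodesic through i, and the hyperbolic circle of center z₁ and radius R; let Q(z₁, t, R) = d(i, w'). Then, with β = |z₁|² + 1, e^{Q(z₁,t,R)} = 2y₁ e^R / (β − (β − 2) cos(t) + 2x₁ sin(t)) + O(1) as R → ∞, uniformly in t, where the implied constant depends on z₁. -/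
/-!
Parametrize the geodesic through `i` in direction `t` by the hyperbolic distance `r = d(i, w')`.
Along it, `2 y₁ cosh d(z₁, w') = β cosh r + b sinh r` with `b = 2x₁ sin t − (β − 2) cos t`,
i.e. `2 y₁ (e^R + e^{−R}) = (β + b) e^r + (β − b) e^{−r}`. Since `(β + b)(β − b) ≥ 4 y₁²` and
`(β + b) + (β − b) = 2β`, both coefficients are positive and `β + b ≥ 2 y₁² / β` uniformly in
`t`; dividing by `β + b` leaves an error of at most `(2 y₁ + 2β) / (β + b)`.
-/

open UpperHalfPlane Real

lemma sin_mul_neg_of_mul_neg {t x : ℝ} (ht : t ∈ Set.Ioo (-π) π) (h : t * x < 0) :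
    Real.sin t * x < 0 := by
  rcases lt_or_gt_of_ne (left_ne_zero_of_mul h.ne) with htneg | htpos
  · exact mul_neg_of_neg_of_pos (Real.sin_neg_of_neg_of_neg_pi_lt htneg ht.1)
      (pos_of_mul_neg_right h htneg.le)
  · exact mul_neg_of_pos_of_neg (Real.sin_pos_of_pos_of_lt_pi htpos ht.2)
      (neg_of_mul_neg_right h htpos.le)

lemma sin_mul_add_cos_sq_add_sq_eq_one {t x y : ℝ} (hs : Real.sin t ≠ 0)
    (h : (x - -(Real.cos t / Real.sin t)) ^ 2 + y ^ 2 = (1 / |Real.sin t|) ^ 2) :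
    (Real.sin t * x + Real.cos t) ^ 2 + (Real.sin t * y) ^ 2 = 1 := by
  rw [div_pow, one_pow, sq_abs] at h
  field_simp at h
  linear_combination h

namespace UpperHalfPlane

lemma two_im_mul_cosh_dist_I (w : ℍ) :
    2 * w.im * Real.cosh (dist I w) = w.re ^ 2 + w.im ^ 2 + 1 := by
  rw [cosh_dist', I_re, I_im]
  field_simp
  ring

/-- With `(s, c) = (sin t, cos t)`, the circle `(s x + c)² + (s y)² = 1` is the geodesic
through `i` at angle `t` to the imaginary axis; this is its parametrization by `r = d(i, w)`. -/
lemma cosh_sinh_dist_I_of_geodesic {s c : ℝ} (hsc : s ^ 2 + c ^ 2 = 1) {w : ℍ}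
    (hw : (s * w.re + c) ^ 2 + (s * w.im) ^ 2 = 1) (hside : s * w.re < 0) :
    s * w.im * Real.cosh (dist I w) = s - c * w.re ∧
      s * w.im * Real.sinh (dist I w) = -w.re := by
  have hs : s ≠ 0 := left_ne_zero_of_mul hside.ne
  have hcosh : s * w.im * Real.cosh (dist I w) = s - c * w.re := by
    refine mul_left_cancel₀ (mul_ne_zero two_ne_zero hs) ?_
    linear_combination s ^ 2 * two_im_mul_cosh_dist_I w + hw - hsc
  refine ⟨hcosh, ?_⟩
  have hsq : (s * w.im * Real.sinh (dist I w)) ^ 2 = w.re ^ 2 := by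
    linear_combination -(s * w.im) ^ 2 * Real.cosh_sq (dist I w) +
      (s * w.im * Real.cosh (dist I w) + s - c * w.re) * hcosh - hw + (w.re ^ 2 + 1) * hsc
  rcases sq_eq_sq_iff_eq_or_eq_neg.mp hsq with h | h
  · have hnonneg : 0 ≤ s * (s * w.im * Real.sinh (dist I w)) := by
      rw [show s * (s * w.im * Real.sinh (dist I w)) =
        s ^ 2 * (w.im * Real.sinh (dist I w)) by ring]
      exact mul_nonneg (sq_nonneg s)
        (mul_nonneg w.im_pos.le (Real.sinh_nonneg_iff.mpr dist_nonneg))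
    rw [h] at hnonneg
    linarith
  · exact h

lemma norm_sq_eq_re_sq_add_im_sq (z : ℍ) : ‖(z : ℂ)‖ ^ 2 = z.re ^ 2 + z.im ^ 2 := by
  rw [Complex.sq_norm, Complex.normSq_apply, coe_re, coe_im]
  ring

lemma two_im_mul_cosh_dist_of_geodesic (z : ℍ) {s c : ℝ} (hsc : s ^ 2 + c ^ 2 = 1) {w : ℍ}
    (hw : (s * w.re + c) ^ 2 + (s * w.im) ^ 2 = 1) (hside : s * w.re < 0) :
    2 * z.im * Real.cosh (dist z w) = (‖(z : ℂ)‖ ^ 2 + 1) * Real.cosh (dist I w) +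
      (2 * z.re * s - ((‖(z : ℂ)‖ ^ 2 + 1) - 2) * c) * Real.sinh (dist I w) := by
  obtain ⟨hcosh, hsinh⟩ := cosh_sinh_dist_I_of_geodesic hsc hw hside
  have hs : s ≠ 0 := left_ne_zero_of_mul hside.ne
  have hzw : 2 * z.im * w.im * Real.cosh (dist z w) =
      (z.re - w.re) ^ 2 + z.im ^ 2 + w.im ^ 2 := by
    rw [cosh_dist']
    field_simp
  refine mul_right_cancel₀ (mul_ne_zero w.im_pos.ne' (pow_ne_zero 2 hs)) ?_
  rw [norm_sq_eq_re_sq_add_im_sq]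
  linear_combination s ^ 2 * hzw + hw - hsc - ((z.re ^ 2 + z.im ^ 2 + 1) * s) * hcosh -
    ((2 * z.re * s - (z.re ^ 2 + z.im ^ 2 + 1 - 2) * c) * s) * hsinh

lemma four_im_sq_le (z : ℍ) {s c : ℝ} (hsc : s ^ 2 + c ^ 2 = 1) :
    4 * z.im ^ 2 ≤
      (‖(z : ℂ)‖ ^ 2 + 1) ^ 2 - (2 * z.re * s - ((‖(z : ℂ)‖ ^ 2 + 1) - 2) * c) ^ 2 := by
  rw [norm_sq_eq_re_sq_add_im_sq]
  nlinarith [sq_nonneg ((z.re ^ 2 + z.im ^ 2 - 1) * s + 2 * z.re * c)]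

end UpperHalfPlane

lemma abs_exp_sub_div_le_of_two_mul_cosh_eq {y a b R r : ℝ} (hy : 0 < y) (ha : 0 ≤ a)
    (hR : 0 ≤ R) (hr : 0 ≤ r) (hab : 4 * y ^ 2 ≤ a ^ 2 - b ^ 2)
    (h : 2 * y * Real.cosh R = a * Real.cosh r + b * Real.sinh r) :
    |Real.exp r - 2 * y * Real.exp R / (a + b)| ≤ a * (a + y) / y ^ 2 := by
  have hplus : 0 < a + b := by nlinarith
  have hminus : 0 < a - b := by nlinarith
  have hplus_lb : 2 * y ^ 2 ≤ a * (a + b) := by nlinarith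
  have hexp : (a + b) * Real.exp r - 2 * y * Real.exp R =
      2 * y * Real.exp (-R) - (a - b) * Real.exp (-r) := by
    rw [Real.cosh_eq, Real.cosh_eq, Real.sinh_eq] at h
    linear_combination -2 * h
  have herr : |(a + b) * Real.exp r - 2 * y * Real.exp R| ≤ 2 * y + 2 * a := by
    have hR' : Real.exp (-R) ≤ 1 := Real.exp_le_one_iff.mpr (neg_nonpos.mpr hR)
    have hr' : Real.exp (-r) ≤ 1 := Real.exp_le_one_iff.mpr (neg_nonpos.mpr hr)
    have hR'' := Real.exp_pos (-R)
    have hr'' := Real.exp_pos (-r)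
    rw [hexp, abs_le]
    constructor <;> nlinarith
  calc |Real.exp r - 2 * y * Real.exp R / (a + b)|
      = |(a + b) * Real.exp r - 2 * y * Real.exp R| / (a + b) := by
        rw [← abs_of_pos hplus, ← abs_div, abs_of_pos hplus]
        congr 1
        field_simp
    _ ≤ (2 * y + 2 * a) / (a + b) := by gcongr
    _ ≤ a * (a + y) / y ^ 2 := by
        rw [div_le_div_iff₀ hplus (by positivity)]
        nlinarith

/-- Let `w'` be the intersection point (the one with negative real part
for `t > 0` and positive real part for `t < 0`) of the geodesic through `i` making angle
`t ∈ (−π,π) \ {0}` with the vertical geodesic through `i` (the Euclidean half-circle with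
center `α = −cot t` and radius `δ = 1/|sin t|`) and the hyperbolic circle of center `z₁`
and radius `R`, and let `Q(z₁,t,R) = d(i,w')`.  Then, with `β = |z₁|² + 1`,
`e^{Q(z₁,t,R)} = 2y₁e^R/(β − (β−2)cos t + 2x₁ sin t) + O(1)` as `R → ∞`, uniformly in `t`. -/
theorem exp_dist_to_intersection (z1 : ℍ) :
    ∃ C R0 : ℝ, ∀ R : ℝ, R0 ≤ R → ∀ t : ℝ, t ∈ Set.Ioo (-π) π → t ≠ 0 → ∀ w' : ℍ,
      -- `w'` lies on the Euclidean half-circle with center `−cot t`, radius `1/|sin t|`: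
      (w'.re - (-(Real.cos t / Real.sin t))) ^ 2 + w'.im ^ 2 = (1 / |Real.sin t|) ^ 2 →
      -- `w'` lies on the hyperbolic circle of center `z₁` and radius `R`:
      dist z1 w' = R →
      -- `w'` is the intersection point with `sign(t) · Re w' < 0`:
      t * w'.re < 0 →
      |Real.exp (dist UpperHalfPlane.I w') -
          2 * z1.im * Real.exp R /
            ((‖(z1 : ℂ)‖ ^ 2 + 1) - ((‖(z1 : ℂ)‖ ^ 2 + 1) - 2) * Real.cos t +
              2 * z1.re * Real.sin t)| ≤ C := by
  refine ⟨(‖(z1 : ℂ)‖ ^ 2 + 1) * ((‖(z1 : ℂ)‖ ^ 2 + 1) + z1.im) / z1.im ^ 2, 0,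
    fun R hR t ht _ w' hcircle hdist hside => ?_⟩
  have hside' := sin_mul_neg_of_mul_neg ht hside
  have hgeodesic := sin_mul_add_cos_sq_add_sq_eq_one (left_ne_zero_of_mul hside'.ne) hcircle
  have hsc := Real.sin_sq_add_cos_sq t
  have hkey := two_im_mul_cosh_dist_of_geodesic z1 hsc hgeodesic hside'
  rw [hdist] at hkey
  convert abs_exp_sub_div_le_of_two_mul_cosh_eq z1.im_pos (by positivity) hR dist_nonneg
    (four_im_sq_le z1 hsc) hkey using 4
  ring
end

section
/- For w' = x' + iy' ∈ ℍ lying on the Euclidean half-circle through i with center α ∈ ℝ and radius δ = √(1 + α²) (so that y' = √(1 − x'² + 2αx')), the quantity (|w' + i| + |w' − i|)/(|w' + i| − |w' − i|) equals (x'² + y'² + 1 + √((x'² + y'² + 1)² − 4y'²))/(2y'), and this equals (1 + αx' + δ|x'|)/y'. Consequently e^{d(i, w')} = (1 + αx' + δ|x'|)/y', where d is the hyperbolic distance on ℍ. -/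
/-!
Halving the distance, `e^d = (cosh + sinh)(d/2) / (cosh − sinh)(d/2)`, and the formulas for
`cosh (d/2)` and `sinh (d/2)` share a denominator, which gives the ratio of `|w + i|` and `|w − i|`.
Unhalved, `e^d = cosh d + √(cosh² d − 1)` with `cosh d(i, w) = (x² + y² + 1)/(2y)`. On the circle
`x² + y² = 1 + 2αx`, so `x² + y² + 1 = 2(1 + αx)` and the discriminant is `(2δ|x|)²`.
-/

open UpperHalfPlane ComplexConjugate

theorem Real.exp_eq_cosh_add_sqrt_cosh_sq_sub_one {x : ℝ} (hx : 0 ≤ x) :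
    Real.exp x = Real.cosh x + √(Real.cosh x ^ 2 - 1) := by
  rw [← Real.sinh_sq, Real.sqrt_sq (Real.sinh_nonneg_iff.2 hx), Real.cosh_add_sinh]

namespace UpperHalfPlane

theorem exp_dist (z w : ℍ) :
    Real.exp (dist z w) = (dist (z : ℂ) (conj (w : ℂ)) + dist (z : ℂ) w) /
      (dist (z : ℂ) (conj (w : ℂ)) - dist (z : ℂ) w) := by
  have hk : 2 * √(z.im * w.im) ≠ 0 := by have := z.im_pos; have := w.im_pos; positivity
  have hd : Real.exp (dist z w) = (Real.cosh (dist z w / 2) + Real.sinh (dist z w / 2)) /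
      (Real.cosh (dist z w / 2) - Real.sinh (dist z w / 2)) := by
    rw [Real.cosh_add_sinh, Real.cosh_sub_sinh, ← Real.exp_sub]
    ring_nf
  rw [hd, cosh_half_dist, sinh_half_dist, ← add_div, ← sub_div, div_div_div_cancel_right₀ hk]

theorem exp_dist_I_eq_norm_div (w : ℍ) :
    Real.exp (dist I w) = (‖(w : ℂ) + Complex.I‖ + ‖(w : ℂ) - Complex.I‖) /
      (‖(w : ℂ) + Complex.I‖ - ‖(w : ℂ) - Complex.I‖) := by
  rw [UpperHalfPlane.dist_comm, exp_dist, coe_I, Complex.conj_I, Complex.dist_eq,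
    Complex.dist_eq, sub_neg_eq_add]

theorem cosh_dist_I (w : ℍ) :
    Real.cosh (dist I w) = (w.re ^ 2 + w.im ^ 2 + 1) / (2 * w.im) := by
  rw [cosh_dist', I_re, I_im]
  ring_nf

theorem exp_dist_I_eq_sqrt_div (w : ℍ) :
    Real.exp (dist I w) = (w.re ^ 2 + w.im ^ 2 + 1 +
      √((w.re ^ 2 + w.im ^ 2 + 1) ^ 2 - 4 * w.im ^ 2)) / (2 * w.im) := by
  have hy := w.im_pos
  have hdisc : ((w.re ^ 2 + w.im ^ 2 + 1) / (2 * w.im)) ^ 2 - 1 =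
      ((w.re ^ 2 + w.im ^ 2 + 1) ^ 2 - 4 * w.im ^ 2) / (2 * w.im) ^ 2 := by
    field_simp
    ring
  rw [Real.exp_eq_cosh_add_sqrt_cosh_sq_sub_one dist_nonneg, cosh_dist_I, hdisc,
    Real.sqrt_div' _ (by positivity), Real.sqrt_sq (by positivity), ← add_div]

end UpperHalfPlane

/-- For `w' = x' + iy' ∈ ℍ` on the Euclidean half-circle through `i`
with center `α ∈ ℝ` and radius `δ = √(1 + α²)`, one has `y' = √(1 − x'² + 2αx')`,
`(|w' + i| + |w' − i|)/(|w' + i| − |w' − i|)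
  = (x'² + y'² + 1 + √((x'² + y'² + 1)² − 4y'²))/(2y') = (1 + αx' + δ|x'|)/y'`,
and consequently `e^{d(i, w')} = (1 + αx' + δ|x'|)/y'`. -/
theorem exp_dist_I_of_mem_halfCircle (α : ℝ) (w' : ℍ)
    (hcirc : (w'.re - α) ^ 2 + w'.im ^ 2 = 1 + α ^ 2) :
    w'.im = Real.sqrt (1 - w'.re ^ 2 + 2 * α * w'.re) ∧
    (‖(w' : ℂ) + Complex.I‖ + ‖(w' : ℂ) - Complex.I‖) /
        (‖(w' : ℂ) + Complex.I‖ - ‖(w' : ℂ) - Complex.I‖) =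
      (w'.re ^ 2 + w'.im ^ 2 + 1 +
          Real.sqrt ((w'.re ^ 2 + w'.im ^ 2 + 1) ^ 2 - 4 * w'.im ^ 2)) / (2 * w'.im) ∧
    (w'.re ^ 2 + w'.im ^ 2 + 1 +
          Real.sqrt ((w'.re ^ 2 + w'.im ^ 2 + 1) ^ 2 - 4 * w'.im ^ 2)) / (2 * w'.im) =
      (1 + α * w'.re + Real.sqrt (1 + α ^ 2) * |w'.re|) / w'.im ∧
    Real.exp (dist UpperHalfPlane.I w') =
      (1 + α * w'.re + Real.sqrt (1 + α ^ 2) * |w'.re|) / w'.im := by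
  set x := w'.re
  set y := w'.im
  have hy : 0 < y := w'.im_pos
  have hsum : x ^ 2 + y ^ 2 + 1 = 2 * (1 + α * x) := by linarith
  have hdisc : (x ^ 2 + y ^ 2 + 1) ^ 2 - 4 * y ^ 2 = (2 * (√(1 + α ^ 2) * |x|)) ^ 2 := by
    rw [mul_pow, mul_pow, Real.sq_sqrt (by positivity), sq_abs]
    nlinarith
  have hcircle : (x ^ 2 + y ^ 2 + 1 + √((x ^ 2 + y ^ 2 + 1) ^ 2 - 4 * y ^ 2)) / (2 * y) =
      (1 + α * x + √(1 + α ^ 2) * |x|) / y := by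
    rw [hdisc, Real.sqrt_sq (by positivity), hsum]
    field_simp
  refine ⟨?_, (exp_dist_I_eq_norm_div w').symm.trans (exp_dist_I_eq_sqrt_div w'), hcircle,
    (exp_dist_I_eq_sqrt_div w').trans hcircle⟩
  rw [← Real.sqrt_sq hy.le]
  congr 1
  linarith
end
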